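/- arXiv:1904.12223 — 9 statements merged into one kernel-verified Lean document; each statement's English description precedes it below -/
import Mathlib

section
/- For every nonempty closed set A ⊆ ℝ^d, the squared distance function x ↦ (dist(x, A))² is a DC function on ℝ^d. -/
def IsDCOn {E : Type*} [NormedAddCommGroup E] [NormedSpace ℝ E]
    (C : Set E) (f : E → ℝ) : Prop :=
  ∃ g h : E → ℝ, ConvexOn ℝ C g ∧ ConvexOn ℝ C h ∧ ∀ x ∈ C, f x = g x - h x

theorem stmt_1 (d : ℕ) (A : Set (EuclideanSpace ℝ (Fin d)))
    (hA : A.Nonempty) (hAc : IsClosed A) :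
    IsDCOn Set.univ (fun x => (Metric.infDist x A) ^ 2) := by
  set h : EuclideanSpace ℝ (Fin d) → ℝ :=
    fun x => ‖x‖ ^ 2 - (Metric.infDist x A) ^ 2 with hh
  -- key bound: for a ∈ A, the affine function 2⟪x,a⟫ - ‖a‖² is ≤ h x
  have key : ∀ (x : EuclideanSpace ℝ (Fin d)), ∀ a ∈ A,
      2 * (inner ℝ x a : ℝ) - ‖a‖ ^ 2 ≤ h x := by
    intro x a ha
    have h1 : Metric.infDist x A ≤ ‖x - a‖ := by
      simpa [dist_eq_norm] using Metric.infDist_le_dist_of_mem ha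
    have h2 : (Metric.infDist x A) ^ 2 ≤ ‖x - a‖ ^ 2 :=
      pow_le_pow_left₀ Metric.infDist_nonneg h1 2
    have h3 : ‖x - a‖ ^ 2 = ‖x‖ ^ 2 - 2 * (inner ℝ x a : ℝ) + ‖a‖ ^ 2 := by
      simpa [norm_sub_rev] using
        @norm_sub_sq_real (EuclideanSpace ℝ (Fin d)) _ _ x a
    simp only [hh]
    nlinarith
  -- h attains the affine value at the minimizer
  have eqmin : ∀ (x : EuclideanSpace ℝ (Fin d)),
      ∃ a ∈ A, h x = 2 * (inner ℝ x a : ℝ) - ‖a‖ ^ 2 := by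
    intro x
    obtain ⟨a, ha, hax⟩ := hAc.exists_infDist_eq_dist hA x
    refine ⟨a, ha, ?_⟩
    have h3 : ‖x - a‖ ^ 2 = ‖x‖ ^ 2 - 2 * (inner ℝ x a : ℝ) + ‖a‖ ^ 2 := by
      simpa [norm_sub_rev] using
        @norm_sub_sq_real (EuclideanSpace ℝ (Fin d)) _ _ x a
    have h4 : Metric.infDist x A ^ 2 = ‖x - a‖ ^ 2 := by
      rw [hax, dist_eq_norm]
    simp only [hh]
    nlinarith
  have hconv : ConvexOn ℝ Set.univ h := by
    refine ⟨convex_univ, fun x _ y _ s t hs ht hst => ?_⟩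
    obtain ⟨a, ha, hax⟩ := eqmin (s • x + t • y)
    have hx := key x a ha
    have hy := key y a ha
    have hlin : (inner ℝ (s • x + t • y) a : ℝ)
        = s * (inner ℝ x a : ℝ) + t * (inner ℝ y a : ℝ) := by
      simp [inner_add_left, real_inner_smul_left, Finset.mul_sum, mul_assoc]
    rw [hax, hlin]
    simp only [smul_eq_mul]
    nlinarith
  have hg : ConvexOn ℝ Set.univ (fun x : EuclideanSpace ℝ (Fin d) => ‖x‖ ^ 2) := by
    refine ⟨convex_univ, fun x _ y _ s t hs ht hst => ?_⟩
    have h1 : ‖s • x + t • y‖ ≤ s * ‖x‖ + t * ‖y‖ := by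
      calc ‖s • x + t • y‖ ≤ ‖s • x‖ + ‖t • y‖ := norm_add_le _ _
        _ = s * ‖x‖ + t * ‖y‖ := by
          rw [norm_smul, norm_smul, Real.norm_of_nonneg hs, Real.norm_of_nonneg ht]
    have h2 : ‖s • x + t • y‖ ^ 2 ≤ (s * ‖x‖ + t * ‖y‖) ^ 2 :=
      pow_le_pow_left₀ (norm_nonneg _) h1 2
    simp only [smul_eq_mul]
    nlinarith [norm_nonneg x, norm_nonneg y, sq_nonneg (‖x‖ - ‖y‖), mul_nonneg hs ht]
  exact ⟨_, h, hg, hconv, fun x _ => by simp [hh]⟩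
end

section
/- Let C ⊆ ℝ^d be open and convex, let f₁, …, f_m : C → ℝ be DC functions, and let f : C → ℝ be continuous with f(x) ∈ {f₁(x), …, f_m(x)} for every x ∈ C. Then f is DC on C. -/
open Finset

private lemma convexOn_sum' {E : Type*} [NormedAddCommGroup E] [NormedSpace ℝ E] {ι : Type*}
    (t : Finset ι) {f : ι → E → ℝ} {s : Set E} (hs : Convex ℝ s)
    (hf : ∀ i ∈ t, ConvexOn ℝ s (f i)) : ConvexOn ℝ s (fun x => ∑ i ∈ t, f i x) := by
  classical
  induction t using Finset.cons_induction with
  | empty => simpa using convexOn_const 0 hs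
  | cons a t ha ih =>
    simp only [Finset.sum_cons]
    exact (hf a (Finset.mem_cons_self a t)).add (ih fun i hi => hf i (Finset.mem_cons_of_mem hi))

lemma selection_convexOn {E : Type*} [NormedAddCommGroup E] [NormedSpace ℝ E]
    {C : Set E} (hCo : IsOpen C) (hCc : Convex ℝ C) {m : ℕ} (φ : Fin m → E → ℝ)
    (hφ : ∀ i, ConvexOn ℝ C (φ i)) (hφc : ∀ i, ContinuousOn (φ i) C)
    (f : E → ℝ) (hfc : ContinuousOn f C) (hsel : ∀ x ∈ C, ∃ i, f x = φ i x) :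
    ConvexOn ℝ C (fun x => f x + ∑ p : Fin m × Fin m, (φ p.1 x ⊔ φ p.2 x)) := by
  classical
  set h : E → ℝ := fun x => ∑ p : Fin m × Fin m, (φ p.1 x ⊔ φ p.2 x) with hh
  have hhc : ContinuousOn h C := by
    apply continuousOn_finset_sum
    intro p _
    exact (hφc p.1).sup (hφc p.2)
  set G : E → ℝ := fun x => f x + h x with hG
  have hGc : ContinuousOn G C := hfc.add hhc
  refine ⟨hCc, ?_⟩
  intro x hx y hy a b ha hb hab
  -- parametrize the segment
  set γ : ℝ → E := fun t => x + t • (y - x) with hγ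
  have hγcont : Continuous γ := by
    apply continuous_const.add
    exact continuous_id.smul continuous_const
  have hγC : ∀ t ∈ Set.Icc (0:ℝ) 1, γ t ∈ C := by
    intro t ht
    have h1 : γ t = (1 - t) • x + t • y := by simp only [hγ]; module
    rw [h1]
    exact hCc hx hy (by linarith [ht.2]) ht.1 (by ring)
  set L : ℝ → ℝ := fun t => (1 - t) * G x + t * G y with hL
  set u : ℝ → ℝ := fun t => G (γ t) - L t with hu
  have huc : ContinuousOn u (Set.Icc (0:ℝ) 1) := by
    apply ContinuousOn.sub
    · exact hGc.comp hγcont.continuousOn hγC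
    · exact (Continuous.continuousOn (by continuity))
  have hγb : a • x + b • y = γ b := by
    have hab' : a = 1 - b := by linarith
    simp only [hγ, hab']; module
  rw [hγb]
  by_contra hcon
  have hub : 0 < u b := by
    simp only [hu, hL]
    simp only [smul_eq_mul] at hcon
    push_neg at hcon
    have : a = 1 - b := by linarith
    rw [this] at hcon
    linarith
  -- max of u on [0,1]
  obtain ⟨t', ht'mem, ht'max⟩ := isCompact_Icc.exists_isMaxOn ⟨0, by norm_num⟩ huc
  set M : ℝ := u t' with hM
  have hmax : ∀ t ∈ Set.Icc (0:ℝ) 1, u t ≤ M := fun t ht => isMaxOn_iff.mp ht'max t ht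
  have hM0 : 0 < M := lt_of_lt_of_le hub (hmax b ⟨hb, by linarith⟩)
  set S : Set ℝ := Set.Icc (0:ℝ) 1 ∩ u ⁻¹' {M} with hS
  have hSclosed : IsClosed S := huc.preimage_isClosed_of_isClosed isClosed_Icc isClosed_singleton
  have hSne : S.Nonempty := ⟨t', ht'mem, rfl⟩
  have hSbdd : BddAbove S := BddAbove.mono Set.inter_subset_left bddAbove_Icc
  set t₀ : ℝ := sSup S with ht₀def
  have ht₀S : t₀ ∈ S := hSclosed.csSup_mem hSne hSbdd
  have ht₀Icc : t₀ ∈ Set.Icc (0:ℝ) 1 := ht₀S.1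
  have hut₀ : u t₀ = M := ht₀S.2
  have hlast : ∀ t ∈ Set.Icc (0:ℝ) 1, t₀ < t → u t < M := by
    intro t ht h'
    rcases lt_or_eq_of_le (hmax t ht) with h | h
    · exact h
    · exact absurd (le_csSup hSbdd ⟨ht, h⟩) (not_le.mpr h')
  have hγ0 : γ 0 = x := by simp [hγ]
  have hγ1 : γ 1 = y := by simp only [hγ, one_smul]; abel
  have hu0 : u 0 = 0 := by simp [hu, hL, hγ0]
  have hu1 : u 1 = 0 := by simp [hu, hL, hγ1]
  have ht₀0 : 0 < t₀ := by
    rcases lt_or_eq_of_le ht₀Icc.1 with h | h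
    · exact h
    · exfalso; rw [← h] at hut₀; rw [hu0] at hut₀; linarith
  have ht₀1 : t₀ < 1 := by
    rcases lt_or_eq_of_le ht₀Icc.2 with h | h
    · exact h
    · exfalso; rw [h] at hut₀; rw [hu1] at hut₀; linarith
  set z₀ : E := γ t₀ with hz₀def
  have hz₀C : z₀ ∈ C := hγC t₀ ht₀Icc
  -- eventually: near t₀, inactive branches stay inactive, and t stays in Ioo 0 1
  have hP : ∀ᶠ t in nhds t₀,
      (∀ i : Fin m, φ i z₀ ≠ f z₀ → φ i (γ t) ≠ f (γ t)) ∧ t ∈ Set.Ioo (0:ℝ) 1 := by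
    refine Filter.Eventually.and ?_ (isOpen_Ioo.eventually_mem ⟨ht₀0, ht₀1⟩)
    rw [Filter.eventually_all]
    intro i
    by_cases hi : φ i z₀ = f z₀
    · filter_upwards with t ht; exact absurd hi ht
    · have hci : ContinuousAt (fun t => φ i (γ t) - f (γ t)) t₀ := by
        have h1 : ContinuousAt (φ i) z₀ := (hφc i).continuousAt (hCo.mem_nhds hz₀C)
        have h2 : ContinuousAt f z₀ := hfc.continuousAt (hCo.mem_nhds hz₀C)
        have h3 : ContinuousAt (fun z => φ i z - f z) (γ t₀) := hz₀def ▸ (h1.sub h2)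
        exact ContinuousAt.comp (g := fun z => φ i z - f z) (f := γ) h3 hγcont.continuousAt
      have hne : (fun t => φ i (γ t) - f (γ t)) t₀ ≠ 0 := sub_ne_zero.mpr hi
      filter_upwards [hci.eventually_ne hne] with t ht _
      exact sub_ne_zero.mp ht
  obtain ⟨ε, hε, hball⟩ := Metric.eventually_nhds_iff.mp hP
  set s₁ : ℝ := t₀ - ε / 2 with hs₁def
  set t₁ : ℝ := t₀ + ε / 2 with ht₁def
  have hds : dist s₁ t₀ < ε := by
    simp only [hs₁def, Real.dist_eq]
    rw [abs_of_nonpos (by linarith)]; linarith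
  have hdt : dist t₁ t₀ < ε := by
    simp only [ht₁def, Real.dist_eq]
    rw [abs_of_nonneg (by linarith)]; linarith
  obtain ⟨hPs, hsIoo⟩ := hball hds
  obtain ⟨hPt, htIoo⟩ := hball hdt
  have hsIcc : s₁ ∈ Set.Icc (0:ℝ) 1 := ⟨hsIoo.1.le, hsIoo.2.le⟩
  have htIcc : t₁ ∈ Set.Icc (0:ℝ) 1 := ⟨htIoo.1.le, htIoo.2.le⟩
  have hγsC : γ s₁ ∈ C := hγC s₁ hsIcc
  have hγtC : γ t₁ ∈ C := hγC t₁ htIcc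
  -- active branches
  obtain ⟨l, hl⟩ := hsel (γ s₁) hγsC
  obtain ⟨k, hk⟩ := hsel (γ t₁) hγtC
  have hl₀ : φ l z₀ = f z₀ := by
    by_contra hc
    exact hPs l hc hl.symm
  have hk₀ : φ k z₀ = f z₀ := by
    by_contra hc
    exact hPt k hc hk.symm
  -- the convex comparison function
  set W : E → ℝ := fun z => φ k z + φ l z + ∑ p ∈ (univ : Finset (Fin m × Fin m)).erase (k, l),
    (φ p.1 z ⊔ φ p.2 z) with hWdef
  have hWconv : ConvexOn ℝ C W := by
    refine ((hφ k).add (hφ l)).add (convexOn_sum' _ hCc fun p _ => ?_)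
    exact (hφ p.1).sup (hφ p.2)
  have hWid : ∀ z, W z = (φ k z ⊓ φ l z) + h z := by
    intro z
    have h1 : (φ k z ⊔ φ l z) + ∑ p ∈ (univ : Finset (Fin m × Fin m)).erase (k, l),
        (φ p.1 z ⊔ φ p.2 z) = h z := by
      exact Finset.add_sum_erase (univ : Finset (Fin m × Fin m))
        (fun p => φ p.1 z ⊔ φ p.2 z) (Finset.mem_univ (k, l))
    have h2 : φ k z ⊓ φ l z + (φ k z ⊔ φ l z) = φ k z + φ l z := inf_add_sup _ _
    simp only [hWdef]
    linarith
  -- midpoint relation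
  have hmid : z₀ = (1/2 : ℝ) • γ s₁ + (1/2 : ℝ) • γ t₁ := by
    simp only [hz₀def, hγ, hs₁def, ht₁def]
    module
  have hWmid : W z₀ ≤ (1/2 : ℝ) • W (γ s₁) + (1/2 : ℝ) • W (γ t₁) := by
    rw [hmid]
    exact hWconv.2 hγsC hγtC (by norm_num) (by norm_num) (by norm_num)
  -- comparison at the three points
  have hWz₀ : W z₀ = G z₀ := by
    rw [hWid]
    have : φ k z₀ ⊓ φ l z₀ = f z₀ := by rw [hk₀, hl₀]; exact inf_idem _
    simp only [hG, this]
  have hWs : W (γ s₁) ≤ G (γ s₁) := by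
    rw [hWid]
    have : φ k (γ s₁) ⊓ φ l (γ s₁) ≤ f (γ s₁) := hl ▸ inf_le_right
    simp only [hG]; linarith
  have hWt : W (γ t₁) ≤ G (γ t₁) := by
    rw [hWid]
    have : φ k (γ t₁) ⊓ φ l (γ t₁) ≤ f (γ t₁) := hk ▸ inf_le_left
    simp only [hG]; linarith
  have hus : u s₁ ≤ M := hmax s₁ hsIcc
  have hut : u t₁ < M := hlast t₁ htIcc (by simp only [ht₁def]; linarith)
  have hLmid : L t₀ = (1/2 : ℝ) * L s₁ + (1/2 : ℝ) * L t₁ := by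
    simp only [hL, hs₁def, ht₁def]; ring
  have hus' : G (γ s₁) - L s₁ ≤ M := hus
  have hut' : G (γ t₁) - L t₁ < M := hut
  have hMt₀ : G z₀ - L t₀ = M := hut₀
  simp only [smul_eq_mul] at hWmid
  clear_value h G γ L u M S t₀ z₀ s₁ t₁ W
  have hb1 : W z₀ - L t₀ = M := by rw [hWz₀]; exact hMt₀
  have hb2 : W z₀ - L t₀ ≤ 1/2 * (W (γ s₁) - L s₁) + 1/2 * (W (γ t₁) - L t₁) := by linarith
  have hb3 : 1/2 * (W (γ s₁) - L s₁) + 1/2 * (W (γ t₁) - L t₁) < M := by linarith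
  linarith


theorem stmt_3 (d m : ℕ) (C : Set (EuclideanSpace ℝ (Fin d)))
    (hCo : IsOpen C) (hCc : Convex ℝ C)
    (F : Fin m → EuclideanSpace ℝ (Fin d) → ℝ)
    (hF : ∀ i, IsDCOn C (F i))
    (f : EuclideanSpace ℝ (Fin d) → ℝ)
    (hfc : ContinuousOn f C)
    (hsel : ∀ x ∈ C, ∃ i, f x = F i x) :
    IsDCOn C f := by
  classical
  choose g h hg hh hgh using hF
  set H : EuclideanSpace ℝ (Fin d) → ℝ := fun x => ∑ j : Fin m, h j x with hHdef
  have hHconv : ConvexOn ℝ C H := convexOn_sum' univ hCc (fun j _ => hh j)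
  set φ : Fin m → EuclideanSpace ℝ (Fin d) → ℝ :=
    fun i x => g i x + ∑ j ∈ (univ : Finset (Fin m)).erase i, h j x with hφdef
  have hphiconv : ∀ i, ConvexOn ℝ C (φ i) := by
    intro i
    have : ConvexOn ℝ C (fun x => g i x + ∑ j ∈ (univ : Finset (Fin m)).erase i, h j x) :=
      (hg i).add (convexOn_sum' ((univ : Finset (Fin m)).erase i) hCc (fun j _ => hh j))
    exact this
  have hφc : ∀ i, ContinuousOn (φ i) C := fun i => (hphiconv i).continuousOn hCo
  set f' : EuclideanSpace ℝ (Fin d) → ℝ := fun x => f x + H x with hf'def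
  have hf'c : ContinuousOn f' C := hfc.add (hHconv.continuousOn hCo)
  have hsel' : ∀ x ∈ C, ∃ i, f' x = φ i x := by
    intro x hx
    obtain ⟨i, hi⟩ := hsel x hx
    refine ⟨i, ?_⟩
    have h1 : h i x + ∑ j ∈ (univ : Finset (Fin m)).erase i, h j x = H x :=
      Finset.add_sum_erase (univ : Finset (Fin m)) (fun j => h j x) (Finset.mem_univ i)
    have h2 : f x = g i x - h i x := hi.trans (hgh i x hx)
    simp only [hf'def, hφdef]
    linarith
  have hmain := selection_convexOn hCo hCc φ hphiconv hφc f' hf'c hsel'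
  refine ⟨fun x => f' x + ∑ p : Fin m × Fin m, (φ p.1 x ⊔ φ p.2 x),
    fun x => H x + ∑ p : Fin m × Fin m, (φ p.1 x ⊔ φ p.2 x), hmain, ?_, ?_⟩
  · exact hHconv.add (convexOn_sum' _ hCc (fun p _ => (hphiconv p.1).sup (hphiconv p.2)))
  · intro x hx
    simp only [hf'def]
    ring
end

section
/- Every C² function f : C → ℝ on an open convex set C ⊆ ℝ^d is DC. -/
open Metric Set

local notation "⟪" x ", " y "⟫" => @inner ℝ _ _ x y

section Aux

variable {E : Type*} [NormedAddCommGroup E] [InnerProductSpace ℝ E]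

/-- The squared norm is convex. -/
lemma convexOn_normSq' : ConvexOn ℝ (univ : Set E) (fun w => ‖w‖ ^ 2) := by
  refine ⟨convex_univ, fun x _ y _ a b ha hb hab => ?_⟩
  simp only [smul_eq_mul]
  have h1 : ‖a • x + b • y‖ ≤ a * ‖x‖ + b * ‖y‖ := by
    calc ‖a • x + b • y‖ ≤ ‖a • x‖ + ‖b • y‖ := norm_add_le _ _
    _ = a * ‖x‖ + b * ‖y‖ := by
        rw [norm_smul, norm_smul, Real.norm_of_nonneg ha, Real.norm_of_nonneg hb]
  have h2 : ‖a • x + b • y‖ ^ 2 ≤ (a * ‖x‖ + b * ‖y‖) ^ 2 :=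
    pow_le_pow_left₀ (norm_nonneg _) h1 2
  nlinarith [sq_nonneg (‖x‖ - ‖y‖), mul_nonneg ha hb, norm_nonneg x, norm_nonneg y]

noncomputable def auxv (C : Set E) : E → ℝ := fun x => (Metric.infDist x Cᶜ)⁻¹

noncomputable def auxu (C : Set E) : E → ℝ := fun x => ‖x‖ ^ 2 + auxv C x

def auxK (C : Set E) (s : ℝ) : Set E := {w | w ∈ C ∧ auxu C w ≤ s}

noncomputable def auxD (C : Set E) (f : E → ℝ) (s : ℝ) : ℝ :=
  sSup ((fun w => ‖fderiv ℝ (fderiv ℝ f) w‖) '' auxK C s)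

noncomputable def auxm (C : Set E) (f : E → ℝ) (s : ℝ) : ℝ := auxD C f (s + 2) / 2 + 1

noncomputable def auxp (C : Set E) (f : E → ℝ) (t : ℝ) : ℝ := ∫ s in (0:ℝ)..t, auxm C f s

variable {C : Set E} {f : E → ℝ}

lemma auxv_nonneg (x : E) : 0 ≤ auxv C x := inv_nonneg.2 Metric.infDist_nonneg

lemma infDist_pos_of_mem (hCo : IsOpen C) (hccne : (Cᶜ : Set E).Nonempty) {x : E} (hx : x ∈ C) :
    0 < Metric.infDist x Cᶜ :=
  (hCo.isClosed_compl.notMem_iff_infDist_pos hccne).1 (by simpa using hx)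

lemma convexOn_auxv (hCo : IsOpen C) (hCc : Convex ℝ C) : ConvexOn ℝ C (auxv C) := by
  refine ⟨hCc, fun x hx y hy a b ha hb hab => ?_⟩
  by_cases hcc : Cᶜ = (∅ : Set E)
  · simp [auxv, hcc, Metric.infDist_empty]
  · have hccne : (Cᶜ : Set E).Nonempty := nonempty_iff_ne_empty.2 hcc
    have hdx : 0 < Metric.infDist x Cᶜ := infDist_pos_of_mem hCo hccne hx
    have hdy : 0 < Metric.infDist y Cᶜ := infDist_pos_of_mem hCo hccne hy
    set dx := Metric.infDist x Cᶜ with hdxdef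
    set dy := Metric.infDist y Cᶜ with hdydef
    set r := a * dx + b * dy with hr
    have hrpos : 0 < r := by
      rcases (show 0 < a ∨ 0 < b by by_contra h; push_neg at h; nlinarith) with h | h
      · nlinarith [mul_nonneg hb hdy.le]
      · nlinarith [mul_nonneg ha hdx.le]
    set z := a • x + b • y with hz
    have hball : ∀ w ∈ (Cᶜ : Set E), r ≤ dist z w := by
      intro w hw
      by_contra hlt
      push_neg at hlt
      set e := w - z with he
      have hne : ‖e‖ < r := by rw [he, ← dist_eq_norm']; exact hlt
      have hxe : x + (dx / r) • e ∈ C := by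
        have hdist : dist x (x + (dx / r) • e) < dx := by
          rw [dist_eq_norm]
          have : x - (x + (dx / r) • e) = -((dx / r) • e) := by abel
          rw [this, norm_neg, norm_smul, Real.norm_of_nonneg (by positivity)]
          rw [div_mul_eq_mul_div, div_lt_iff₀ hrpos]
          nlinarith
        rw [hdxdef] at hdist
        have := Metric.notMem_of_dist_lt_infDist (s := (Cᶜ : Set E)) hdist
        simpa using this
      have hye : y + (dy / r) • e ∈ C := by
        have hdist : dist y (y + (dy / r) • e) < dy := by
          rw [dist_eq_norm]
          have : y - (y + (dy / r) • e) = -((dy / r) • e) := by abel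
          rw [this, norm_neg, norm_smul, Real.norm_of_nonneg (by positivity)]
          rw [div_mul_eq_mul_div, div_lt_iff₀ hrpos]
          nlinarith
        rw [hdydef] at hdist
        have := Metric.notMem_of_dist_lt_infDist (s := (Cᶜ : Set E)) hdist
        simpa using this
      have hcoef : a * (dx / r) + b * (dy / r) = 1 := by
        field_simp
        exact hr.symm
      have hzw : w = a • (x + (dx / r) • e) + b • (y + (dy / r) • e) := by
        have h1 : a • ((dx / r) • e) + b • ((dy / r) • e) = e := by
          rw [smul_smul, smul_smul, ← add_smul, hcoef, one_smul]
        have h2 : a • (x + (dx / r) • e) + b • (y + (dy / r) • e)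
            = (a • x + b • y) + (a • ((dx / r) • e) + b • ((dy / r) • e)) := by
          module
        rw [h2, h1, ← hz, he]; abel
      have : w ∈ C := by rw [hzw]; exact hCc hxe hye ha hb hab
      exact hw this
    have hzr : r ≤ Metric.infDist z Cᶜ := by
      by_contra hlt
      push_neg at hlt
      obtain ⟨w, hw, hdw⟩ := (Metric.infDist_lt_iff hccne).1 hlt
      exact absurd (hball w hw) (by linarith)
    have hdz : 0 < Metric.infDist z Cᶜ := lt_of_lt_of_le hrpos hzr
    show (Metric.infDist z Cᶜ)⁻¹ ≤ a • dx⁻¹ + b • dy⁻¹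
    simp only [smul_eq_mul]
    have h1 : (Metric.infDist z Cᶜ)⁻¹ ≤ r⁻¹ := by
      apply inv_anti₀ hrpos hzr
    have h2 : r⁻¹ ≤ a * dx⁻¹ + b * dy⁻¹ := by
      have hi1 : dx⁻¹ * dx = 1 := inv_mul_cancel₀ hdx.ne'
      have hi2 : dy⁻¹ * dy = 1 := inv_mul_cancel₀ hdy.ne'
      have heq : a * dx⁻¹ + b * dy⁻¹ = (a * dy + b * dx) / (dx * dy) := by
        rw [eq_div_iff (by positivity : (dx * dy) ≠ 0)]
        linear_combination (a * dy) * hi1 + (b * dx) * hi2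
      have he2 : (a * dy + b * dx) * (a * dx + b * dy) = dx * dy + a * b * (dx - dy) ^ 2 := by
        linear_combination ((a + b + 1) * (dx * dy)) * hab
      rw [heq, inv_eq_one_div, div_le_div_iff₀ hrpos (by positivity), hr, he2]
      nlinarith [mul_nonneg (mul_nonneg ha hb) (sq_nonneg (dx - dy))]
    linarith

lemma continuousOn_auxv (hCo : IsOpen C) : ContinuousOn (auxv C) C := by
  by_cases hcc : Cᶜ = (∅ : Set E)
  · have : auxv C = fun _ => (0:ℝ)⁻¹ := by
      funext x; simp [auxv, hcc, Metric.infDist_empty]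
    rw [this]; exact continuousOn_const
  · have hccne : (Cᶜ : Set E).Nonempty := nonempty_iff_ne_empty.2 hcc
    exact ContinuousOn.inv₀ (Metric.continuous_infDist_pt _).continuousOn
      (fun x hx => (infDist_pos_of_mem hCo hccne hx).ne')

lemma convexOn_auxu (hCo : IsOpen C) (hCc : Convex ℝ C) : ConvexOn ℝ C (auxu C) :=
  (convexOn_normSq'.subset (subset_univ C) hCc).add (convexOn_auxv hCo hCc)

lemma continuousOn_auxu (hCo : IsOpen C) : ContinuousOn (auxu C) C :=
  ((continuous_norm.pow 2).continuousOn).add (continuousOn_auxv hCo)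

lemma isClosed_auxK (hCo : IsOpen C) (s : ℝ) : IsClosed (auxK C s) := by
  by_cases hcc : Cᶜ = (∅ : Set E)
  · have hCuniv : C = univ := by rwa [compl_empty_iff] at hcc
    have : auxK C s = {w : E | ‖w‖ ^ 2 ≤ s} := by
      ext w
      simp [auxK, auxu, auxv, hcc, Metric.infDist_empty, hCuniv]
    rw [this]
    exact isClosed_le (by fun_prop) continuous_const
  · have hccne : (Cᶜ : Set E).Nonempty := nonempty_iff_ne_empty.2 hcc
    have hKeq : auxK C s = {w : E | (‖w‖ ^ 2 - s) * Metric.infDist w Cᶜ + 1 ≤ 0} := by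
      ext w
      constructor
      · rintro ⟨hwC, hwu⟩
        have hd : 0 < Metric.infDist w Cᶜ := infDist_pos_of_mem hCo hccne hwC
        simp only [auxu, auxv] at hwu
        have h3 : ‖w‖ ^ 2 - s ≤ -(Metric.infDist w Cᶜ)⁻¹ := by linarith
        have h4 := mul_le_mul_of_nonneg_right h3 hd.le
        rw [neg_mul, inv_mul_cancel₀ hd.ne'] at h4
        simp only [mem_setOf_eq]
        linarith
      · intro hw
        simp only [mem_setOf_eq] at hw
        have hd : 0 < Metric.infDist w Cᶜ := by
          rcases eq_or_lt_of_le (Metric.infDist_nonneg : (0:ℝ) ≤ Metric.infDist w Cᶜ) with h | h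
          · exfalso; rw [← h] at hw; simp at hw; linarith
          · exact h
        have hwC : w ∈ C := by
          by_contra hnw
          have : Metric.infDist w Cᶜ = 0 := Metric.infDist_zero_of_mem (by simpa using hnw)
          rw [this] at hd; exact lt_irrefl _ hd
        refine ⟨hwC, ?_⟩
        simp only [auxu, auxv]
        have h3 : ‖w‖ ^ 2 - s ≤ -1 / Metric.infDist w Cᶜ := by
          rw [le_div_iff₀ hd]
          linarith
        have h4 : -1 / Metric.infDist w Cᶜ = -(Metric.infDist w Cᶜ)⁻¹ := by
          field_simp
        rw [h4] at h3
        linarith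
    rw [hKeq]
    exact isClosed_le (((((continuous_norm.pow 2)).sub continuous_const).mul
      (Metric.continuous_infDist_pt _)).add continuous_const) continuous_const

lemma auxK_subset (s : ℝ) : auxK C s ⊆ C := fun _ hw => hw.1

lemma isCompact_auxK [FiniteDimensional ℝ E] (hCo : IsOpen C) (s : ℝ) :
    IsCompact (auxK C s) := by
  apply IsCompact.of_isClosed_subset (isCompact_closedBall (0:E) (Real.sqrt (max s 0)))
    (isClosed_auxK hCo s)
  intro w hw
  rw [mem_closedBall_zero_iff]
  have h1 : ‖w‖ ^ 2 ≤ s := by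
    have := hw.2
    simp only [auxu] at this
    linarith [auxv_nonneg (C := C) w]
  rw [show ‖w‖ = Real.sqrt (‖w‖ ^ 2) by rw [Real.sqrt_sq (norm_nonneg w)]]
  exact Real.sqrt_le_sqrt (h1.trans (le_max_left s 0))

lemma continuousOn_normSecondDeriv (hCo : IsOpen C) (hf : ContDiffOn ℝ 2 f C) :
    ContinuousOn (fun w => ‖fderiv ℝ (fderiv ℝ f) w‖) C := by
  have hΦ : ContDiffOn ℝ 1 (fderiv ℝ f) C := hf.fderiv_of_isOpen hCo (by norm_num)
  exact (hΦ.continuousOn_fderiv_of_isOpen hCo (le_refl 1)).norm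

lemma auxD_nonneg (s : ℝ) : 0 ≤ auxD C f s := by
  apply Real.sSup_nonneg
  rintro x ⟨w, _, rfl⟩
  exact norm_nonneg (fderiv ℝ (fderiv ℝ f) w)

lemma le_auxD [FiniteDimensional ℝ E] (hCo : IsOpen C) (hf : ContDiffOn ℝ 2 f C) {s : ℝ}
    {w : E} (hw : w ∈ auxK C s) : ‖fderiv ℝ (fderiv ℝ f) w‖ ≤ auxD C f s :=
  le_csSup ((isCompact_auxK hCo s).bddAbove_image
    ((continuousOn_normSecondDeriv hCo hf).mono (auxK_subset s)))
    (mem_image_of_mem _ hw)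

lemma monotone_auxD [FiniteDimensional ℝ E] (hCo : IsOpen C) (hf : ContDiffOn ℝ 2 f C) :
    Monotone (auxD C f) := by
  intro s t hst
  rcases (auxK C s).eq_empty_or_nonempty with h | h
  · rw [auxD, h]; simp [Real.sSup_empty, auxD_nonneg (C := C) (f := f) t]
  · apply csSup_le_csSup
    · exact (isCompact_auxK hCo t).bddAbove_image
        ((continuousOn_normSecondDeriv hCo hf).mono (auxK_subset t))
    · exact h.image _
    · apply image_mono
      intro w hw
      exact ⟨hw.1, hw.2.trans hst⟩

lemma one_le_auxm (s : ℝ) : 1 ≤ auxm C f s := by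
  have := auxD_nonneg (C := C) (f := f) (s + 2)
  simp only [auxm]; linarith

lemma auxm_nonneg (s : ℝ) : 0 ≤ auxm C f s := le_trans zero_le_one (one_le_auxm s)

lemma monotone_auxm [FiniteDimensional ℝ E] (hCo : IsOpen C) (hf : ContDiffOn ℝ 2 f C) :
    Monotone (auxm C f) := by
  intro s t hst
  simp only [auxm]
  have := monotone_auxD hCo hf (show s + 2 ≤ t + 2 by linarith)
  linarith

/-- Supporting line inequality for the primitive of a monotone function. -/
lemma auxp_support [FiniteDimensional ℝ E] (hCo : IsOpen C) (hf : ContDiffOn ℝ 2 f C)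
    (s₀ s : ℝ) : auxp C f s₀ + auxm C f s₀ * (s - s₀) ≤ auxp C f s := by
  have hm := monotone_auxm hCo hf
  have hint : ∀ a b : ℝ, IntervalIntegrable (auxm C f) MeasureTheory.volume a b :=
    fun a b => hm.intervalIntegrable
  have key : auxp C f s - auxp C f s₀ = ∫ r in s₀..s, auxm C f r :=
    intervalIntegral.integral_interval_sub_left (hint 0 s) (hint 0 s₀)
  rcases le_total s₀ s with h | h
  · have h1 : auxm C f s₀ * (s - s₀) ≤ ∫ r in s₀..s, auxm C f r := by
      have h2 := intervalIntegral.integral_mono_on h intervalIntegrable_const (hint s₀ s)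
        (fun x hx => hm hx.1)
      rw [intervalIntegral.integral_const] at h2
      rw [mul_comm]
      simpa [smul_eq_mul] using h2
    linarith
  · have h1 : (∫ r in s..s₀, auxm C f r) ≤ auxm C f s₀ * (s₀ - s) := by
      have h2 := intervalIntegral.integral_mono_on h (hint s s₀) intervalIntegrable_const
        (fun x hx => hm hx.2)
      rw [intervalIntegral.integral_const] at h2
      rw [mul_comm]
      simpa [smul_eq_mul] using h2
    have h3 : (∫ r in s₀..s, auxm C f r) = -∫ r in s..s₀, auxm C f r :=
      intervalIntegral.integral_symm s s₀
    nlinarith [key, h1, h3]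

lemma continuous_auxp [FiniteDimensional ℝ E] (hCo : IsOpen C) (hf : ContDiffOn ℝ 2 f C) :
    Continuous (auxp C f) :=
  intervalIntegral.continuous_primitive
    (fun _ _ => (monotone_auxm hCo hf).intervalIntegrable) 0

lemma convexOn_auxh [FiniteDimensional ℝ E] (hCo : IsOpen C) (hCc : Convex ℝ C)
    (hf : ContDiffOn ℝ 2 f C) : ConvexOn ℝ C (fun w => auxp C f (auxu C w)) := by
  refine ⟨hCc, fun x hx y hy a b ha hb hab => ?_⟩
  set z := a • x + b • y with hz
  set s₁ := auxu C z with hs₁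
  have hcu : s₁ ≤ a * auxu C x + b * auxu C y := by
    simpa [smul_eq_mul] using (convexOn_auxu hCo hCc).2 hx hy ha hb hab
  have h1 := auxp_support hCo hf s₁ (auxu C x)
  have h2 := auxp_support hCo hf s₁ (auxu C y)
  have h3 := mul_le_mul_of_nonneg_left h1 ha
  have h4 := mul_le_mul_of_nonneg_left h2 hb
  have h5 : 0 ≤ auxm C f s₁ * (a * auxu C x + b * auxu C y - s₁) :=
    mul_nonneg (auxm_nonneg s₁) (by linarith)
  have h34 := add_le_add h3 h4
  have hL : a * (auxp C f s₁ + auxm C f s₁ * (auxu C x - s₁))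
      + b * (auxp C f s₁ + auxm C f s₁ * (auxu C y - s₁))
      = auxp C f s₁ + auxm C f s₁ * (a * auxu C x + b * auxu C y - s₁) := by
    linear_combination (auxp C f s₁ - auxm C f s₁ * s₁) * hab
  rw [hL] at h34
  simp only [smul_eq_mul]
  linarith [h34, h5]

end Aux

section Calc

variable {E : Type*} [NormedAddCommGroup E] [InnerProductSpace ℝ E]

/-- A C² function with second derivative bounded by `2c` becomes convex after
adding `c‖·‖²`, on an open convex set. -/
lemma convexOn_add_sq {U : Set E} (hU : IsOpen U) (hUc : Convex ℝ U) {f : E → ℝ}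
    (hf : ContDiffOn ℝ 2 f U) {c : ℝ}
    (hc : ∀ w ∈ U, ‖fderiv ℝ (fderiv ℝ f) w‖ ≤ 2 * c) :
    ConvexOn ℝ U fun w => f w + c * ‖w‖ ^ 2 := by
  refine ⟨hUc, fun x hx y hy a b ha hb hab => ?_⟩
  set v := y - x with hv
  set γ : ℝ → E := fun t => x + t • v with hγdef
  have hγt : ∀ t, γ t = (1 - t) • x + t • y := by
    intro t; simp only [hγdef, hv]; module
  have hγmem : ∀ t ∈ Icc (0:ℝ) 1, γ t ∈ U := by
    intro t ht
    rw [hγt]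
    exact hUc hx hy (by linarith [ht.2]) ht.1 (by ring)
  have hγ' : ∀ t : ℝ, HasDerivAt γ v t := by
    intro t
    exact (((hasDerivAt_id t).smul_const v).const_add x).congr_deriv (one_smul ℝ v)
  set Φ := fderiv ℝ f with hΦdef
  have hΦ : ContDiffOn ℝ 1 Φ U := hf.fderiv_of_isOpen hU (by norm_num)
  have hfd : ∀ t ∈ Icc (0:ℝ) 1, DifferentiableAt ℝ f (γ t) := fun t ht =>
    (hf.differentiableOn (by norm_num)).differentiableAt (hU.mem_nhds (hγmem t ht))
  have hΦd : ∀ t ∈ Icc (0:ℝ) 1, DifferentiableAt ℝ Φ (γ t) := fun t ht =>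
    (hΦ.differentiableOn (by norm_num)).differentiableAt (hU.mem_nhds (hγmem t ht))
  set F : ℝ → ℝ := fun t => f (γ t) + c * ⟪γ t, γ t⟫ with hFdef
  set F' : ℝ → ℝ := fun t => Φ (γ t) v + c * (⟪γ t, v⟫ + ⟪v, γ t⟫) with hF'def
  set F'' : ℝ → ℝ := fun t => fderiv ℝ Φ (γ t) v v + c * (⟪v, v⟫ + ⟪v, v⟫) with hF''def
  have hF' : ∀ t ∈ Icc (0:ℝ) 1, HasDerivAt F (F' t) t := by
    intro t ht
    have part1 : HasDerivAt (fun t => f (γ t)) (Φ (γ t) v) t := by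
      simpa [Function.comp_def] using
        ((hfd t ht).hasFDerivAt.comp_hasDerivAt t (hγ' t))
    have part2 : HasDerivAt (fun t => ⟪γ t, γ t⟫) (⟪γ t, v⟫ + ⟪v, γ t⟫) t :=
      (hγ' t).inner ℝ (hγ' t)
    exact part1.add (part2.const_mul c)
  have hF'' : ∀ t ∈ Icc (0:ℝ) 1, HasDerivAt F' (F'' t) t := by
    intro t ht
    have h1 : HasDerivAt (fun t => Φ (γ t)) (fderiv ℝ Φ (γ t) v) t := by
      simpa [Function.comp_def] using
        ((hΦd t ht).hasFDerivAt.comp_hasDerivAt t (hγ' t))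
    have part1 : HasDerivAt (fun t => Φ (γ t) v) (fderiv ℝ Φ (γ t) v v) t := by
      simpa using h1.clm_apply (hasDerivAt_const t v)
    have part2a : HasDerivAt (fun t => ⟪γ t, v⟫) (⟪v, v⟫ : ℝ) t := by
      simpa using (hγ' t).inner ℝ (hasDerivAt_const t v)
    have part2b : HasDerivAt (fun t => ⟪v, γ t⟫) (⟪v, v⟫ : ℝ) t := by
      simpa using (hasDerivAt_const t v).inner ℝ (hγ' t)
    exact part1.add ((part2a.add part2b).const_mul c)
  have hnonneg : ∀ t ∈ Icc (0:ℝ) 1, 0 ≤ F'' t := by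
    intro t ht
    have hb' := hc (γ t) (hγmem t ht)
    have h1 : ‖fderiv ℝ Φ (γ t) v v‖ ≤ ‖fderiv ℝ Φ (γ t)‖ * ‖v‖ * ‖v‖ := by
      calc ‖fderiv ℝ Φ (γ t) v v‖ ≤ ‖fderiv ℝ Φ (γ t) v‖ * ‖v‖ :=
            ContinuousLinearMap.le_opNorm _ _
      _ ≤ (‖fderiv ℝ Φ (γ t)‖ * ‖v‖) * ‖v‖ := by
          gcongr
          exact ContinuousLinearMap.le_opNorm _ _
      _ = _ := by ring
    have h2 : ⟪v, v⟫ = ‖v‖ * ‖v‖ := real_inner_self_eq_norm_mul_norm v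
    have h3 : -(‖fderiv ℝ Φ (γ t)‖ * ‖v‖ * ‖v‖) ≤ fderiv ℝ Φ (γ t) v v := by
      have := neg_abs_le (fderiv ℝ Φ (γ t) v v)
      rw [Real.norm_eq_abs] at h1
      linarith
    have h4 : ‖fderiv ℝ Φ (γ t)‖ * ‖v‖ * ‖v‖ ≤ 2 * c * (‖v‖ * ‖v‖) := by
      have := mul_le_mul_of_nonneg_right hb'
        (mul_nonneg (norm_nonneg v) (norm_nonneg v))
      nlinarith [this]
    simp only [hF''def]
    rw [h2]
    nlinarith
  have hFcont : ContinuousOn F (Icc 0 1) := fun t ht =>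
    ((hF' t ht).continuousAt.continuousWithinAt)
  have hcvx : ConvexOn ℝ (Icc (0:ℝ) 1) F := by
    apply convexOn_of_hasDerivWithinAt2_nonneg (convex_Icc 0 1) hFcont
    · intro t ht
      rw [interior_Icc] at ht
      exact (hF' t (Ioo_subset_Icc_self ht)).hasDerivWithinAt
    · intro t ht
      rw [interior_Icc] at ht
      exact (hF'' t (Ioo_subset_Icc_self ht)).hasDerivWithinAt
    · intro t ht
      rw [interior_Icc] at ht
      exact hnonneg t (Ioo_subset_Icc_self ht)
  have h0 : γ 0 = x := by simp [hγdef]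
  have h1 : γ 1 = y := by simp [hγdef, hv]
  have hb' : γ b = a • x + b • y := by
    rw [hγt]
    have : a = 1 - b := by linarith
    rw [this]
  have key := hcvx.2 (left_mem_Icc.2 zero_le_one) (right_mem_Icc.2 zero_le_one) ha hb hab
  simp only [smul_eq_mul, mul_zero, mul_one, zero_add] at key
  -- key : F b ≤ a * F 0 + b * F 1
  have e0 : F 0 = f x + c * ‖x‖ ^ 2 := by
    simp only [hFdef, h0, real_inner_self_eq_norm_sq]
  have e1 : F 1 = f y + c * ‖y‖ ^ 2 := by
    simp only [hFdef, h1, real_inner_self_eq_norm_sq]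
  have eb : F b = f (a • x + b • y) + c * ‖a • x + b • y‖ ^ 2 := by
    simp only [hFdef, hb', real_inner_self_eq_norm_sq]
  rw [e0, e1, eb] at key
  simpa [smul_eq_mul] using key

/-- A locally convex continuous function on a convex set is convex. -/
lemma convexOn_of_locally {S : Set E} (hS : Convex ℝ S) {g : E → ℝ}
    (hg : ContinuousOn g S)
    (hloc : ∀ z ∈ S, ∃ ε > 0, ball z ε ⊆ S ∧ ConvexOn ℝ (ball z ε) g) :
    ConvexOn ℝ S g := by
  refine ⟨hS, fun x hx y hy a b ha hb hab => ?_⟩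
  set v := y - x with hv
  set γ : ℝ → E := fun t => x + t • v with hγdef
  have hγt : ∀ t, γ t = (1 - t) • x + t • y := by
    intro t; simp only [hγdef, hv]; module
  have hγmem : ∀ t ∈ Icc (0:ℝ) 1, γ t ∈ S := by
    intro t ht
    rw [hγt]
    exact hS hx hy (by linarith [ht.2]) ht.1 (by ring)
  set ψ : ℝ → ℝ := fun t => g (γ t) - ((1 - t) * g x + t * g y) with hψdef
  have hψcont : ContinuousOn ψ (Icc 0 1) := by
    apply ContinuousOn.sub
    · exact hg.comp (by fun_prop) hγmem
    · fun_prop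
  have hb1 : b ∈ Icc (0:ℝ) 1 := ⟨hb, by linarith⟩
  have hab' : a = 1 - b := by linarith
  have hgoal : γ b = a • x + b • y := by rw [hγt, hab']
  rw [← hgoal]
  by_contra hcon
  push_neg at hcon
  simp only [smul_eq_mul] at hcon
  have hψb : 0 < ψ b := by
    simp only [hψdef]
    rw [← hab']
    linarith
  obtain ⟨tm, htm, htmax⟩ := isCompact_Icc.exists_isMaxOn
    ⟨0, left_mem_Icc.2 zero_le_one⟩ hψcont
  set M := ψ tm with hM
  have hMpos : 0 < M := lt_of_lt_of_le hψb (htmax hb1)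
  set A := Icc (0:ℝ) 1 ∩ ψ ⁻¹' (Ici M) with hA
  have hAne : A.Nonempty := ⟨tm, htm, le_refl M⟩
  have hAclosed : IsClosed A :=
    hψcont.preimage_isClosed_of_isClosed isClosed_Icc isClosed_Ici
  have hAbdd : BddBelow A := ⟨0, fun t ht => ht.1.1⟩
  set t₀ := sInf A with ht₀def
  have ht₀A : t₀ ∈ A := hAclosed.csInf_mem hAne hAbdd
  have hψt₀ : M ≤ ψ t₀ := ht₀A.2
  have ht₀Icc : t₀ ∈ Icc (0:ℝ) 1 := ht₀A.1
  have hψ0 : ψ 0 = 0 := by simp [hψdef, hγdef]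
  have hψ1 : ψ 1 = 0 := by
    have : γ 1 = y := by simp [hγdef, hv]
    simp [hψdef, this]
  have ht₀pos : 0 < t₀ := by
    rcases ht₀Icc.1.lt_or_eq with h | h
    · exact h
    · exfalso; rw [← h, hψ0] at hψt₀; linarith
  have ht₀lt : t₀ < 1 := by
    rcases ht₀Icc.2.lt_or_eq with h | h
    · exact h
    · exfalso; rw [h, hψ1] at hψt₀; linarith
  obtain ⟨ε, hε, hballS, hballcvx⟩ := hloc (γ t₀) (hγmem t₀ ht₀Icc)
  set δ := min (min (t₀ / 2) ((1 - t₀) / 2)) (ε / (2 * (‖v‖ + 1))) with hδdef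
  have hδpos : 0 < δ := by
    apply lt_min (lt_min (by linarith) (by linarith))
    positivity
  have hδt₀ : δ ≤ t₀ / 2 := (min_le_left _ _).trans (min_le_left _ _)
  have hδt₁ : δ ≤ (1 - t₀) / 2 := (min_le_left _ _).trans (min_le_right _ _)
  have hmemball : ∀ t : ℝ, |t - t₀| ≤ δ → γ t ∈ ball (γ t₀) ε := by
    intro t ht
    have hdiff : γ t - γ t₀ = (t - t₀) • v := by
      simp only [hγdef]; module
    rw [mem_ball, dist_eq_norm, hdiff, norm_smul, Real.norm_eq_abs]
    have h2 : |t - t₀| * ‖v‖ ≤ δ * (‖v‖ + 1) :=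
      mul_le_mul ht (by linarith) (norm_nonneg v) hδpos.le
    have h3 : δ * (‖v‖ + 1) ≤ ε / 2 := by
      have h4 : δ ≤ ε / (2 * (‖v‖ + 1)) := min_le_right _ _
      have h5 : (0:ℝ) < ‖v‖ + 1 := by positivity
      calc δ * (‖v‖ + 1) ≤ (ε / (2 * (‖v‖ + 1))) * (‖v‖ + 1) := by gcongr
      _ = ε / 2 := by field_simp
    linarith
  set t₁ := t₀ - δ with ht₁def
  set t₂ := t₀ + δ with ht₂def
  have h1b : γ t₁ ∈ ball (γ t₀) ε := by
    apply hmemball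
    rw [ht₁def]
    rw [show t₀ - δ - t₀ = -δ by ring, abs_neg, abs_of_nonneg hδpos.le]
  have h2b : γ t₂ ∈ ball (γ t₀) ε := by
    apply hmemball
    rw [ht₂def]
    rw [show t₀ + δ - t₀ = δ by ring, abs_of_nonneg hδpos.le]
  have hmid : γ t₀ = (1/2 : ℝ) • γ t₁ + (1/2 : ℝ) • γ t₂ := by
    simp only [hγdef, ht₁def, ht₂def]
    module
  have hkey := hballcvx.2 h1b h2b (by norm_num : (0:ℝ) ≤ 1/2) (by norm_num : (0:ℝ) ≤ 1/2)
    (by norm_num)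
  rw [← hmid] at hkey
  simp only [smul_eq_mul] at hkey
  have ht₁Icc : t₁ ∈ Icc (0:ℝ) 1 := ⟨by rw [ht₁def]; linarith, by rw [ht₁def]; linarith⟩
  have ht₂Icc : t₂ ∈ Icc (0:ℝ) 1 := ⟨by rw [ht₂def]; linarith, by rw [ht₂def]; linarith⟩
  have hψt₂ : ψ t₂ ≤ M := htmax ht₂Icc
  have hlin : (1 - t₀) * g x + t₀ * g y
      = 1/2 * ((1 - t₁) * g x + t₁ * g y) + 1/2 * ((1 - t₂) * g x + t₂ * g y) := by
    rw [ht₁def, ht₂def]; ring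
  have hψmid : ψ t₀ ≤ (1/2) * ψ t₁ + (1/2) * ψ t₂ := by
    simp only [hψdef]
    linarith [hkey, hlin]
  clear_value v γ ψ M t₀ t₁ t₂ δ
  have hψt₁ : M ≤ ψ t₁ := by linarith
  have hle : t₀ ≤ t₁ := by rw [ht₀def]; exact csInf_le hAbdd ⟨ht₁Icc, hψt₁⟩
  rw [ht₁def] at hle
  linarith

end Calc

theorem stmt_4 (d : ℕ) (C : Set (EuclideanSpace ℝ (Fin d)))
    (hCo : IsOpen C) (hCc : Convex ℝ C)
    (f : EuclideanSpace ℝ (Fin d) → ℝ)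
    (hf : ContDiffOn ℝ 2 f C) :
    IsDCOn C f := by
  classical
  refine ⟨fun w => f w + auxp C f (auxu C w), fun w => auxp C f (auxu C w), ?_,
    convexOn_auxh hCo hCc hf, fun x _ => by ring⟩
  apply convexOn_of_locally hCc
  · exact hf.continuousOn.add
      ((continuous_auxp hCo hf).comp_continuousOn (continuousOn_auxu hCo))
  · intro z hz
    set s₀ := auxu C z with hs₀
    set c := auxm C f (s₀ - 1/2) with hcdef
    have hcnn : 0 ≤ c := auxm_nonneg _
    have hO : IsOpen (C ∩ (auxu C) ⁻¹' (Ioo (s₀ - 1/2) (s₀ + 1/2))) :=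
      (continuousOn_auxu hCo).isOpen_inter_preimage hCo isOpen_Ioo
    have hzO : z ∈ C ∩ (auxu C) ⁻¹' (Ioo (s₀ - 1/2) (s₀ + 1/2)) :=
      ⟨hz, by simp only [mem_preimage, mem_Ioo]; constructor <;> linarith⟩
    obtain ⟨ε, hε, hball⟩ := Metric.isOpen_iff.1 hO z hzO
    refine ⟨ε, hε, fun w hw => (hball hw).1, ?_⟩
    have heq : (fun w => f w + auxp C f (auxu C w))
        = fun w => (f w + c * ‖w‖ ^ 2) + (auxp C f (auxu C w) - c * ‖w‖ ^ 2) := by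
      funext w; ring
    rw [heq]
    apply ConvexOn.add
    · apply convexOn_add_sq isOpen_ball (convex_ball z ε)
        (hf.mono (fun w hw => (hball hw).1))
      intro w hw
      have hwK : w ∈ auxK C (s₀ + 3/2) := by
        refine ⟨(hball hw).1, ?_⟩
        have := (hball hw).2.2
        linarith
      have hle := le_auxD hCo hf hwK
      have hceq : 2 * c = auxD C f (s₀ + 3/2) + 2 := by
        rw [hcdef]
        have harg : s₀ - 1/2 + 2 = s₀ + 3/2 := by ring
        rw [auxm, harg]; ring
      linarith
    · refine ⟨convex_ball z ε, fun x hx y hy a b ha hb hab => ?_⟩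
      have hxC : x ∈ C := (hball hx).1
      have hyC : y ∈ C := (hball hy).1
      set zz := a • x + b • y with hzz
      have hzzball : zz ∈ ball z ε := (convex_ball z ε) hx hy ha hb hab
      set s₁ := auxu C zz with hs₁'
      have hs₁lb : s₀ - 1/2 < s₁ := (hball hzzball).2.1
      have hms₁ : c ≤ auxm C f s₁ := monotone_auxm hCo hf hs₁lb.le
      have hq : ‖zz‖ ^ 2 ≤ a * ‖x‖ ^ 2 + b * ‖y‖ ^ 2 := by
        simpa [smul_eq_mul] using
          convexOn_normSq'.2 (mem_univ x) (mem_univ y) ha hb hab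
      have hvv : auxv C zz ≤ a * auxv C x + b * auxv C y := by
        simpa [smul_eq_mul] using (convexOn_auxv hCo hCc).2 hxC hyC ha hb hab
      have h1 := auxp_support hCo hf s₁ (auxu C x)
      have h2 := auxp_support hCo hf s₁ (auxu C y)
      have h3 := mul_le_mul_of_nonneg_left h1 ha
      have h4 := mul_le_mul_of_nonneg_left h2 hb
      have hmnn : 0 ≤ auxm C f s₁ := auxm_nonneg _
      have hΔq : 0 ≤ a * ‖x‖ ^ 2 + b * ‖y‖ ^ 2 - ‖zz‖ ^ 2 := by linarith
      have hΔu : a * ‖x‖ ^ 2 + b * ‖y‖ ^ 2 - ‖zz‖ ^ 2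
          ≤ a * auxu C x + b * auxu C y - s₁ := by
        have hdecomp : a * auxu C x + b * auxu C y - s₁
            = (a * ‖x‖ ^ 2 + b * ‖y‖ ^ 2 - ‖zz‖ ^ 2)
              + (a * auxv C x + b * auxv C y - auxv C zz) := by
          simp only [auxu, hs₁']; ring
        rw [hdecomp]; linarith
      have hkey : c * (a * ‖x‖ ^ 2 + b * ‖y‖ ^ 2 - ‖zz‖ ^ 2)
          ≤ auxm C f s₁ * (a * auxu C x + b * auxu C y - s₁) := by
        calc c * (a * ‖x‖ ^ 2 + b * ‖y‖ ^ 2 - ‖zz‖ ^ 2)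
            ≤ auxm C f s₁ * (a * ‖x‖ ^ 2 + b * ‖y‖ ^ 2 - ‖zz‖ ^ 2) :=
              mul_le_mul_of_nonneg_right hms₁ hΔq
        _ ≤ auxm C f s₁ * (a * auxu C x + b * auxu C y - s₁) :=
              mul_le_mul_of_nonneg_left hΔu hmnn
      have h34 := add_le_add h3 h4
      have hL : a * (auxp C f s₁ + auxm C f s₁ * (auxu C x - s₁))
          + b * (auxp C f s₁ + auxm C f s₁ * (auxu C y - s₁))
          = auxp C f s₁ + auxm C f s₁ * (a * auxu C x + b * auxu C y - s₁) := by
        linear_combination (auxp C f s₁ - auxm C f s₁ * s₁) * hab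
      rw [hL] at h34
      simp only [smul_eq_mul]
      linarith [h34, hkey]
end

section
/- Let U ⊆ ℝ be an open interval and γ : U → ℝ a function having finite one-sided derivatives at every point, satisfying γ'₊(x) ≤ γ'₋(x) for all x ∈ U (i.e., γ'₊(x,v) + γ'₊(x,-v) ≤ 0 for v = 1). If the graph of γ is covered by the graphs of finitely many concave functions defined on U, then γ is concave. -/
open Set

-- one-sided derivative bounds from slope bounds
lemma aux_right {γ : ℝ → ℝ} {d x b k : ℝ} (hxb : x < b)
    (hd : HasDerivWithinAt γ d (Set.Ici x) x)
    (h : ∀ t ∈ Set.Ioc x b, k * (t - x) ≤ γ t - γ x) : k ≤ d := by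
  rw [hasDerivWithinAt_iff_tendsto_slope, Set.Ici_sdiff_left] at hd
  refine ge_of_tendsto hd ?_
  filter_upwards [Ioc_mem_nhdsGT hxb] with t ht
  rw [slope_def_field, le_div_iff₀ (by linarith [ht.1])]
  linarith [h t ht]

lemma aux_left {γ : ℝ → ℝ} {d x a k : ℝ} (hax : a < x)
    (hd : HasDerivWithinAt γ d (Set.Iic x) x)
    (h : ∀ t ∈ Set.Ico a x, k * (t - x) ≤ γ t - γ x) : d ≤ k := by
  rw [hasDerivWithinAt_iff_tendsto_slope, Set.Iic_diff_right] at hd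
  refine le_of_tendsto hd ?_
  filter_upwards [Ico_mem_nhdsLT hax] with t ht
  rw [slope_def_field, div_le_iff_of_neg (by linarith [ht.2])]
  linarith [h t ht]

lemma exists_four {S : Set ℝ} (hS : S.Infinite) :
    ∃ a b c d : ℝ, a ∈ S ∧ b ∈ S ∧ c ∈ S ∧ d ∈ S ∧ a < b ∧ b < c ∧ c < d := by
  obtain ⟨t, hts, htf, hcard⟩ := hS.exists_subset_ncard_eq 4
  have hc : htf.toFinset.card = 4 := by
    rw [← Set.ncard_eq_toFinset_card _ htf]; exact hcard
  let e := htf.toFinset.orderIsoOfFin hc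
  have hmem : ∀ j : Fin 4, ((e j : ℝ)) ∈ S := fun j => hts (htf.mem_toFinset.mp (e j).2)
  have hlt : ∀ {j j' : Fin 4}, j < j' → (e j : ℝ) < (e j' : ℝ) := fun h => e.strictMono h
  exact ⟨e 0, e 1, e 2, e 3, hmem 0, hmem 1, hmem 2, hmem 3,
    hlt (by decide), hlt (by decide), hlt (by decide)⟩

set_option maxHeartbeats 2000000 in
lemma chord (U : Set ℝ) (hUo : IsOpen U) (hUc : Convex ℝ U)
    (γ dr dl : ℝ → ℝ)
    (hderiv : ∀ x ∈ U, HasDerivWithinAt γ (dr x) (Set.Ici x) x ∧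
      HasDerivWithinAt γ (dl x) (Set.Iic x) x ∧ dr x ≤ dl x)
    (m : ℕ) (c : Fin m → ℝ → ℝ)
    (hc : ∀ i, ConcaveOn ℝ U (c i))
    (hcov : ∀ x ∈ U, ∃ i, γ x = c i x)
    {p q : ℝ} (hp : p ∈ U) (hq : q ∈ U) (hpq : p < q) :
    ∀ z ∈ Set.Ioo p q, γ p + (γ q - γ p) / (q - p) * (z - p) ≤ γ z := by
  by_contra hcon
  push_neg at hcon
  obtain ⟨z, hz, hzlt⟩ := hcon
  set s : ℝ := (γ q - γ p) / (q - p) with hs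
  have hqp : (0:ℝ) < q - p := by linarith [hpq]
  have hsq : γ q = γ p + s * (q - p) := by
    rw [hs, div_mul_cancel₀ _ hqp.ne']; ring
  -- the amount of failure
  set A : ℝ := γ p + s * (z - p) - γ z with hA
  have hA0 : 0 < A := by linarith
  set ε : ℝ := A / (q - p) with hε
  have hε0 : 0 < ε := div_pos hA0 hqp
  -- Icc p q ⊆ U
  have hIccU : Set.Icc p q ⊆ U := hUc.ordConnected.out hp hq
  -- continuity of γ on U
  have hcontU : ∀ x ∈ U, ContinuousAt γ x := by
    intro x hx
    have h1 := (hderiv x hx).1.continuousWithinAt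
    have h2 := (hderiv x hx).2.1.continuousWithinAt
    have h3 := h2.union h1
    rwa [Set.Iic_union_Ici, continuousWithinAt_univ] at h3
  -- tilted functions and their minimizers
  set g : ℝ → ℝ → ℝ := fun δ t => γ t - (s + δ) * (t - p) with hg
  have hgc : ∀ δ : ℝ, ContinuousOn (g δ) (Set.Icc p q) := by
    intro δ
    apply ContinuousOn.sub
    · exact fun x hx => ((hcontU x (hIccU hx)).continuousWithinAt)
    · exact (continuous_const.mul (continuous_id.sub continuous_const)).continuousOn
  have hmin : ∀ δ : ℝ, ∃ t ∈ Set.Icc p q, IsMinOn (g δ) (Set.Icc p q) t :=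
    fun δ => isCompact_Icc.exists_isMinOn (Set.nonempty_Icc.mpr hpq.le) (hgc δ)
  choose T hT1 hT2 using hmin
  -- basic estimate:  g δ (T δ) ≤ g δ z
  have hTz : ∀ δ : ℝ, g δ (T δ) ≤ g δ z := fun δ => hT2 δ (Set.mem_Icc.mpr ⟨hz.1.le, hz.2.le⟩)
  -- T δ is interior for δ ∈ Ioo 0 ε
  have hint : ∀ δ ∈ Set.Ioo (0:ℝ) ε, T δ ∈ Set.Ioo p q := by
    intro δ hδ
    have h1 := hTz δ
    have hgz : g δ z = γ p - δ * (z - p) - A := by simp only [hg]; rw [hA]; ring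
    have hgp : g δ p = γ p := by simp only [hg]; ring
    have hgq : g δ q = γ p - δ * (q - p) := by simp only [hg]; rw [hsq]; ring
    have hδA : δ * (q - p) < A := by
      have := (lt_div_iff₀ hqp).mp hδ.2
      linarith
    have hne1 : g δ (T δ) < g δ p := by
      rw [hgp]
      have : g δ z < γ p := by rw [hgz]; nlinarith [hδ.1, hz.1]
      linarith
    have hne2 : g δ (T δ) < g δ q := by
      rw [hgq]
      have : g δ z < γ p - δ * (q - p) := by
        rw [hgz]
        nlinarith [hδ.1, hz.1, mul_pos hδ.1 (sub_pos.mpr (show p < z from hz.1))]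
      linarith
    rcases hT1 δ with ⟨hTp, hTq⟩
    constructor
    · rcases eq_or_lt_of_le hTp with h | h
      · exfalso; rw [← h] at hne1; exact lt_irrefl _ hne1
      · exact h
    · rcases eq_or_lt_of_le hTq with h | h
      · exfalso; rw [h] at hne2; exact lt_irrefl _ hne2
      · exact h
  -- the right derivative at T δ equals s + δ
  have hdr : ∀ δ ∈ Set.Ioo (0:ℝ) ε, dr (T δ) = s + δ := by
    intro δ hδ
    obtain ⟨hTp, hTq⟩ := hint δ hδ
    have hTU : T δ ∈ U := hIccU (hT1 δ)
    obtain ⟨hR, hL, hRL⟩ := hderiv (T δ) hTU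
    have hslope : ∀ t ∈ Set.Icc p q, (s + δ) * (t - T δ) ≤ γ t - γ (T δ) := by
      intro t ht
      have h5 := hT2 δ ht
      simp only [hg, Set.mem_setOf_eq] at h5
      nlinarith [h5]
    have h1 : s + δ ≤ dr (T δ) := by
      refine aux_right hTq hR ?_
      intro t ht
      exact hslope t (Set.mem_Icc.mpr ⟨by linarith [ht.1, hTp], ht.2⟩)
    have h2 : dl (T δ) ≤ s + δ := by
      refine aux_left hTp hL ?_
      intro t ht
      exact hslope t (Set.mem_Icc.mpr ⟨ht.1, by linarith [ht.2, hTq]⟩)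
    linarith
  -- monotonicity and slope bounds between minimizers
  have horder : ∀ δ ∈ Set.Ioo (0:ℝ) ε, ∀ δ' ∈ Set.Ioo (0:ℝ) ε, δ < δ' →
      T δ < T δ' ∧ (s + δ) * (T δ' - T δ) ≤ γ (T δ') - γ (T δ) ∧
        γ (T δ') - γ (T δ) ≤ (s + δ') * (T δ' - T δ) := by
    intro δ hδ δ' hδ' hlt
    have h1 := hT2 δ (hT1 δ')
    have h2 := hT2 δ' (hT1 δ)
    simp only [hg, Set.mem_setOf_eq] at h1 h2
    have e1 : (s + δ) * (T δ' - T δ) ≤ γ (T δ') - γ (T δ) := by nlinarith [h1]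
    have e2 : γ (T δ') - γ (T δ) ≤ (s + δ') * (T δ' - T δ) := by nlinarith [h2]
    have e3 : T δ ≤ T δ' := by nlinarith [e1, e2]
    have e4 : T δ ≠ T δ' := by
      intro h
      have := hdr δ hδ
      have h2' := hdr δ' hδ'
      rw [h] at this
      rw [this] at h2'
      linarith
    exact ⟨lt_of_le_of_ne e3 e4, e1, e2⟩
  -- pigeonhole: some concave function matches γ at infinitely many minimizers
  have hio : (Set.Ioo (0:ℝ) ε).Infinite := Set.infinite_coe_iff.mp (Set.Ioo.infinite hε0)
  have hfib : ∃ i : Fin m, {δ ∈ Set.Ioo (0:ℝ) ε | γ (T δ) = c i (T δ)}.Infinite := by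
    by_contra hfin
    push_neg at hfin
    have hsub : Set.Ioo (0:ℝ) ε ⊆ ⋃ i : Fin m, {δ ∈ Set.Ioo (0:ℝ) ε | γ (T δ) = c i (T δ)} := by
      intro δ hδ
      obtain ⟨i, hi⟩ := hcov (T δ) (hIccU (hT1 δ))
      exact Set.mem_iUnion.mpr ⟨i, ⟨hδ, hi⟩⟩
    exact hio ((Set.finite_iUnion hfin).subset hsub)
  obtain ⟨i, hi⟩ := hfib
  obtain ⟨δ1, δ2, δ3, δ4, h1, h2, h3, h4, h12, h23, h34⟩ := exists_four hi
  -- four ordered points where γ = c i, with increasing slopes: contradiction with concavity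
  obtain ⟨hP12, hs12, hs12'⟩ := horder δ1 h1.1 δ2 h2.1 h12
  obtain ⟨hP23, hs23, hs23'⟩ := horder δ2 h2.1 δ3 h3.1 h23
  obtain ⟨hP34, hs34, hs34'⟩ := horder δ3 h3.1 δ4 h4.1 h34
  have hU1 : T δ1 ∈ U := hIccU (hT1 δ1)
  have hU4 : T δ4 ∈ U := hIccU (hT1 δ4)
  have hU2 : T δ2 ∈ U := hIccU (hT1 δ2)
  have c1 := (hc i).slope_anti_adjacent hU1 (hIccU (hT1 δ3)) hP12 hP23
  have c2 := (hc i).slope_anti_adjacent hU2 hU4 hP23 hP34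
  rw [← h1.2, ← h2.2, ← h3.2] at c1
  rw [← h2.2, ← h3.2, ← h4.2] at c2
  -- translate slope bounds to divisions
  have d12 : (γ (T δ2) - γ (T δ1)) / (T δ2 - T δ1) ≤ s + δ2 :=
    (div_le_iff₀ (by linarith)).mpr (by nlinarith [hs12'])
  have d34 : s + δ3 ≤ (γ (T δ4) - γ (T δ3)) / (T δ4 - T δ3) :=
    (le_div_iff₀ (by linarith)).mpr (by nlinarith [hs34])
  have : s + δ3 ≤ s + δ2 := le_trans d34 (le_trans c2 (le_trans c1 d12))
  linarith

theorem stmt_6 (U : Set ℝ) (hUo : IsOpen U) (hUc : Convex ℝ U)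
    (γ dr dl : ℝ → ℝ)
    (hderiv : ∀ x ∈ U, HasDerivWithinAt γ (dr x) (Set.Ici x) x ∧
      HasDerivWithinAt γ (dl x) (Set.Iic x) x ∧ dr x ≤ dl x)
    (m : ℕ) (c : Fin m → ℝ → ℝ)
    (hc : ∀ i, ConcaveOn ℝ U (c i))
    (hcov : ∀ x ∈ U, ∃ i, γ x = c i x) :
    ConcaveOn ℝ U γ := by
  refine ⟨hUc, ?_⟩
  intro x hx y hy a b ha hb hab
  simp only [smul_eq_mul]
  rcases eq_or_lt_of_le ha with ha0 | ha0
  · have hb1 : b = 1 := by linarith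
    simp [← ha0, hb1]
  rcases eq_or_lt_of_le hb with hb0 | hb0
  · have ha1 : a = 1 := by linarith
    simp [← hb0, ha1]
  rcases lt_trichotomy x y with hxy | hxy | hxy
  · have ha' : a = 1 - b := by linarith
    subst ha'
    have hz1 : x < (1 - b) * x + b * y := by nlinarith [mul_pos hb0 (sub_pos.mpr hxy)]
    have hz2 : (1 - b) * x + b * y < y := by nlinarith [mul_pos ha0 (sub_pos.mpr hxy)]
    have hch := chord U hUo hUc γ dr dl hderiv m c hc hcov hx hy hxy
      ((1 - b) * x + b * y) ⟨hz1, hz2⟩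
    have hzx : (1 - b) * x + b * y - x = b * (y - x) := by ring
    rw [hzx] at hch
    have hne : y - x ≠ 0 := (sub_pos.mpr hxy).ne'
    have h6 : (γ y - γ x) / (y - x) * (b * (y - x)) = b * (γ y - γ x) := by
      field_simp
    rw [h6] at hch
    linarith
  · subst hxy
    have e1 : a * x + b * x = x := by rw [← add_mul, hab, one_mul]
    have e2 : a * γ x + b * γ x = γ x := by rw [← add_mul, hab, one_mul]
    rw [e1, e2]
  · have hb' : b = 1 - a := by linarith
    subst hb'
    have hz1 : y < a * x + (1 - a) * y := by nlinarith [mul_pos ha0 (sub_pos.mpr hxy)]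
    have hz2 : a * x + (1 - a) * y < x := by nlinarith [mul_pos hb0 (sub_pos.mpr hxy)]
    have hch := chord U hUo hUc γ dr dl hderiv m c hc hcov hy hx hxy
      (a * x + (1 - a) * y) ⟨hz1, hz2⟩
    have hzy : a * x + (1 - a) * y - y = a * (x - y) := by ring
    rw [hzy] at hch
    have hne : x - y ≠ 0 := (sub_pos.mpr hxy).ne'
    have h6 : (γ x - γ y) / (x - y) * (a * (x - y)) = a * (γ x - γ y) := by
      field_simp
    rw [h6] at hch
    linarith
end

section
/- Let V ⊆ ℝ² be a closed angle with vertex v and opening α ∈ (0, π). Then there exist an affine function A on ℝ² and a concave function ψ on ℝ² that is Lipschitz with constant √2 · tan(α/2), such that |z − v| + ψ(z) = A(z) for all z ∈ V. -/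
set_option maxHeartbeats 1000000

open RealInnerProductSpace

theorem stmt_7 (α : ℝ) (hα : 0 < α) (hα' : α < Real.pi)
    (v : EuclideanSpace ℝ (Fin 2)) (V : Set (EuclideanSpace ℝ (Fin 2)))
    (hV : ∃ L : EuclideanSpace ℝ (Fin 2) ≃ₗᵢ[ℝ] EuclideanSpace ℝ (Fin 2),
      V = (fun z => v + L z) '' {p : EuclideanSpace ℝ (Fin 2) |
        0 ≤ p 0 ∧ |p 1| ≤ p 0 * Real.tan (α / 2)}) :
    ∃ (A ψ : EuclideanSpace ℝ (Fin 2) → ℝ),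
      (∃ (w : EuclideanSpace ℝ (Fin 2)) (c : ℝ), ∀ z, A z = (inner ℝ w z : ℝ) + c) ∧
      ConcaveOn ℝ Set.univ ψ ∧
      (∀ p q, |ψ p - ψ q| ≤ Real.sqrt 2 * Real.tan (α / 2) * dist p q) ∧
      ∀ z ∈ V, ‖z - v‖ + ψ z = A z := by
  obtain ⟨L, hL⟩ := hV
  set t : ℝ := Real.tan (α / 2) with ht
  have ht0 : 0 < t := Real.tan_pos_of_pos_of_lt_pi_div_two (by linarith) (by linarith)
  set s : ℝ := Real.sqrt (1 + t ^ 2) with hs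
  have hs2 : s ^ 2 = 1 + t ^ 2 := Real.sq_sqrt (by positivity)
  have hs1 : 1 ≤ s := by
    nlinarith [Real.sqrt_nonneg (1 + t ^ 2)]
  have hs0 : 0 < s := by linarith
  clear_value s t
  set e0 : EuclideanSpace ℝ (Fin 2) := EuclideanSpace.single 0 1 with he0
  have he0n : ‖e0‖ = 1 := by
    rw [he0, EuclideanSpace.norm_single]; norm_num
  set u : EuclideanSpace ℝ (Fin 2) := L e0 with hu
  set S : Set (EuclideanSpace ℝ (Fin 2)) := {w : EuclideanSpace ℝ (Fin 2) | ‖w‖ = 1 ∧ 1 / s ≤ ⟪e0, w⟫} with hS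
  have hSne : (e0 : EuclideanSpace ℝ (Fin 2)) ∈ S := by
    constructor
    · exact he0n
    · have : ⟪e0, e0⟫ = (1 : ℝ) := by
        rw [real_inner_self_eq_norm_sq, he0n]; ring
      rw [this]
      rw [div_le_one hs0]; exact hs1
  haveI : Nonempty S := ⟨⟨e0, hSne⟩⟩
  set g : S → EuclideanSpace ℝ (Fin 2) := fun w => s • u - L w with hgdef
  have hg : ∀ w : S, ‖g w‖ ≤ t := by
    intro ⟨w, hw1, hw2⟩
    have h1 : g ⟨w, hw1, hw2⟩ = L (s • e0 - w) := by
      simp [hgdef, hu, map_sub, map_smul]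
    rw [h1, L.norm_map]
    have hsq : ‖s • e0 - w‖ ^ 2 ≤ t ^ 2 := by
      rw [norm_sub_sq_real]
      have hinner : ⟪s • e0, w⟫ = s * ⟪e0, w⟫ := real_inner_smul_left _ _ _
      have hns : ‖s • e0‖ = s := by
        rw [norm_smul, he0n]; simp [abs_of_pos hs0]
      have h2 : 1 ≤ s * ⟪e0, w⟫ := by
        have := hw2
        calc (1:ℝ) = s * (1/s) := by field_simp
        _ ≤ s * ⟪e0, w⟫ := by apply mul_le_mul_of_nonneg_left hw2 (le_of_lt hs0)
      rw [hinner, hns, hw1]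
      nlinarith
    nlinarith [norm_nonneg (s • e0 - w)]
  set ψ : EuclideanSpace ℝ (Fin 2) → ℝ := fun z => ⨅ w : S, ⟪g w, z - v⟫ with hψ
  have hbdd : ∀ z : EuclideanSpace ℝ (Fin 2), BddBelow (Set.range fun w : S => ⟪g w, z - v⟫) := by
    intro z
    refine ⟨-(t * ‖z - v‖), ?_⟩
    rintro x ⟨w, rfl⟩
    have h1 := abs_real_inner_le_norm (g w) (z - v)
    have h3 : ‖g w‖ * ‖z - v‖ ≤ t * ‖z - v‖ :=
      mul_le_mul_of_nonneg_right (hg w) (norm_nonneg _)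
    have h4 := neg_abs_le (⟪g w, z - v⟫ : ℝ)
    simp only [Set.mem_setOf_eq]
    linarith
  have hψle : ∀ (z : EuclideanSpace ℝ (Fin 2)) (w : S), ψ z ≤ ⟪g w, z - v⟫ := fun z w => ciInf_le (hbdd z) w
  have hconc : ConcaveOn ℝ Set.univ ψ := by
    refine ⟨convex_univ, ?_⟩
    intro x _ y _ a b ha hb hab
    refine le_ciInf fun w => ?_
    have hx := hψle x w
    have hy := hψle y w
    have hv : (a • x + b • y) - v = a • (x - v) + b • (y - v) := by
      have h := add_smul a b v
      rw [hab, one_smul] at h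
      rw [smul_sub, smul_sub]
      nth_rewrite 1 [h]
      abel
    have key : (⟪g w, (a • x + b • y) - v⟫ : ℝ) = a * ⟪g w, x - v⟫ + b * ⟪g w, y - v⟫ := by
      rw [hv, inner_add_right, real_inner_smul_right, real_inner_smul_right]
    rw [key]
    simp only [smul_eq_mul]
    have := mul_le_mul_of_nonneg_left hx ha
    have := mul_le_mul_of_nonneg_left hy hb
    linarith
  have hlip1 : ∀ p q : EuclideanSpace ℝ (Fin 2), ψ p ≤ ψ q + t * ‖p - q‖ := by
    intro p q
    have h : ψ p - t * ‖p - q‖ ≤ ψ q := by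
      refine le_ciInf fun w => ?_
      have h1 := hψle p w
      have h2 : (⟪g w, p - v⟫ : ℝ) = ⟪g w, q - v⟫ + ⟪g w, p - q⟫ := by
        rw [← inner_add_right]
        congr 1
        abel
      have h3 : (⟪g w, p - q⟫ : ℝ) ≤ t * ‖p - q‖ := by
        have := abs_real_inner_le_norm (g w) (p - q)
        have h4 : ‖g w‖ * ‖p - q‖ ≤ t * ‖p - q‖ :=
          mul_le_mul_of_nonneg_right (hg w) (norm_nonneg _)
        have := le_abs_self (⟪g w, p - q⟫ : ℝ)
        linarith
      linarith
    linarith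
  have hsqrt2 : (1 : ℝ) ≤ Real.sqrt 2 := by
    nlinarith [Real.sq_sqrt (by norm_num : (2:ℝ) ≥ 0), Real.sqrt_nonneg 2]
  have hlip : ∀ p q : EuclideanSpace ℝ (Fin 2), |ψ p - ψ q| ≤ Real.sqrt 2 * t * dist p q := by
    intro p q
    rw [abs_sub_le_iff, dist_eq_norm]
    have h1 := hlip1 p q
    have h2 := hlip1 q p
    rw [norm_sub_rev q p] at h2
    have h3 : t * ‖p - q‖ ≤ Real.sqrt 2 * t * ‖p - q‖ := by
      nlinarith [norm_nonneg (p - q)]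
    constructor <;> linarith
  refine ⟨fun z => s * ⟪u, z⟫ - s * ⟪u, v⟫, ψ, ⟨s • u, -(s * ⟪u, v⟫), fun z => by
    rw [real_inner_smul_left]; ring⟩, hconc, hlip, ?_⟩
  intro z hz
  rw [hL] at hz
  obtain ⟨p, ⟨hp0, hp1⟩, rfl⟩ := hz
  beta_reduce
  have hzv : v + L p - v = L p := by abel
  rw [hzv, L.norm_map]
  have hip : (⟪e0, p⟫ : ℝ) = p 0 := by
    rw [he0, EuclideanSpace.inner_single_left]
    simp
  have hval : ∀ w : S, (⟪g w, L p⟫ : ℝ) = s * p 0 - ⟪(w : EuclideanSpace ℝ (Fin 2)), p⟫ := by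
    intro w
    have h1 : g w = L (s • e0 - (w : EuclideanSpace ℝ (Fin 2))) := by
      simp [hgdef, hu, map_sub, map_smul]
    rw [h1, L.inner_map_map, inner_sub_left, real_inner_smul_left, hip]
  have hnormsq : ‖p‖ ^ 2 = p 0 ^ 2 + p 1 ^ 2 := by
    have h1 : ‖p‖ = Real.sqrt (∑ i, ‖p i‖ ^ 2) := by
      rw [EuclideanSpace.norm_eq]
    rw [h1, Real.sq_sqrt (by positivity), Fin.sum_univ_two]
    simp [sq_abs]
  have hples : ‖p‖ ≤ s * p 0 := by
    have h1 : p 1 ^ 2 ≤ (p 0 * t) ^ 2 := by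
      nlinarith [abs_nonneg (p 1), sq_abs (p 1)]
    have h2 : ‖p‖ ^ 2 ≤ (s * p 0) ^ 2 := by
      rw [hnormsq]
      nlinarith [hs2, sq_nonneg (p 0), h1, ht0, hp0]
    nlinarith [norm_nonneg p, mul_nonneg hs0.le hp0, h2]
  have hψz : ψ (v + L p) = s * p 0 - ‖p‖ := by
    have hlow : s * p 0 - ‖p‖ ≤ ψ (v + L p) := by
      refine le_ciInf fun w => ?_
      rw [hzv, hval w]
      have h2 := real_inner_le_norm (w : EuclideanSpace ℝ (Fin 2)) p
      rw [w.2.1, one_mul] at h2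
      linarith
    have hupp : ψ (v + L p) ≤ s * p 0 - ‖p‖ := by
      by_cases hp : p = 0
      · subst hp
        have h1 := hψle (v + L 0) ⟨e0, hSne⟩
        rw [hzv, hval ⟨e0, hSne⟩] at h1
        simpa using h1
      · have hpn : 0 < ‖p‖ := norm_pos_iff.mpr hp
        have hw0S : (‖p‖⁻¹ • p) ∈ S := by
          refine ⟨?_, ?_⟩
          · rw [norm_smul, norm_inv, norm_norm, inv_mul_cancel₀ hpn.ne']
          · rw [real_inner_smul_right, hip, inv_mul_eq_div, div_le_div_iff₀ hs0 hpn]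
            nlinarith
        have h1 := hψle (v + L p) ⟨_, hw0S⟩
        rw [hzv, hval ⟨_, hw0S⟩] at h1
        have h2 : (⟪‖p‖⁻¹ • p, p⟫ : ℝ) = ‖p‖ := by
          rw [real_inner_smul_left, real_inner_self_eq_norm_sq, sq]
          field_simp
        rw [h2] at h1
        exact h1
    exact le_antisymm hupp hlow
  rw [hψz]
  have h5 : (⟪u, L p⟫ : ℝ) = p 0 := by
    rw [hu, L.inner_map_map, hip]
  have h6 : (⟪u, v + L p⟫ : ℝ) = ⟪u, v⟫ + p 0 := by
    rw [inner_add_right, h5]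
  rw [h6]
  ring
end

section
/- The function φ(x,y) = √(x² + y²) − x, restricted to the closed angle V = {(x,y) : x ≥ 0, |y| ≤ x·tan(α/2)} with 0 < α < π, is Lipschitz on V with constant √2 · tan(α/2). -/
set_option maxHeartbeats 1000000 in
theorem stmt_8 (α : ℝ) (hα : 0 < α) (hα' : α < Real.pi)
    (V : Set (EuclideanSpace ℝ (Fin 2)))
    (hV : V = {p : EuclideanSpace ℝ (Fin 2) |
      0 ≤ p 0 ∧ |p 1| ≤ p 0 * Real.tan (α / 2)})
    (φ : EuclideanSpace ℝ (Fin 2) → ℝ)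
    (hφ : ∀ p, φ p = Real.sqrt ((p 0) ^ 2 + (p 1) ^ 2) - p 0) :
    ∀ p ∈ V, ∀ q ∈ V, |φ p - φ q| ≤ Real.sqrt 2 * Real.tan (α / 2) * dist p q := by
  subst hV
  intro p hp q hq
  obtain ⟨ha, hb⟩ := hp
  obtain ⟨hc, hd⟩ := hq
  set t := Real.tan (α / 2) with htdef
  have ht : 0 < t := Real.tan_pos_of_pos_of_lt_pi_div_two (by linarith) (by linarith)
  set a := p 0 with hA
  set b := p 1 with hB
  set c := q 0 with hC
  set d := q 1 with hD
  have hdist : dist p q = Real.sqrt ((a - c) ^ 2 + (b - d) ^ 2) := by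
    rw [EuclideanSpace.dist_eq, Fin.sum_univ_two]
    simp [Real.dist_eq, sq_abs]
    rfl
  rw [hφ, hφ, hdist]
  set r := Real.sqrt (a ^ 2 + b ^ 2) with hrdef
  set s := Real.sqrt (c ^ 2 + d ^ 2) with hsdef
  have hr0 : 0 ≤ r := Real.sqrt_nonneg _
  have hs0 : 0 ≤ s := Real.sqrt_nonneg _
  have hr2 : r ^ 2 = a ^ 2 + b ^ 2 := Real.sq_sqrt (by positivity)
  have hs2 : s ^ 2 = c ^ 2 + d ^ 2 := Real.sq_sqrt (by positivity)
  have hb2 : b ^ 2 ≤ (a * t) ^ 2 := by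
    have h := mul_self_le_mul_self (abs_nonneg b) hb
    rw [abs_mul_abs_self] at h
    rw [pow_two, pow_two]; exact h
  have hd2 : d ^ 2 ≤ (c * t) ^ 2 := by
    have h := mul_self_le_mul_self (abs_nonneg d) hd
    rw [abs_mul_abs_self] at h
    rw [pow_two, pow_two]; exact h
  have hra : a ≤ r := by
    have h1 : Real.sqrt (a ^ 2) ≤ r := Real.sqrt_le_sqrt (by linarith [sq_nonneg b])
    rwa [Real.sqrt_sq ha] at h1
  have hsc : c ≤ s := by
    have h1 : Real.sqrt (c ^ 2) ≤ s := Real.sqrt_le_sqrt (by linarith [sq_nonneg d])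
    rwa [Real.sqrt_sq hc] at h1
  have hrle : r ≤ (1 + t) * a := by
    have h1 : a ^ 2 + b ^ 2 ≤ ((1 + t) * a) ^ 2 := by
      nlinarith [hb2, mul_nonneg (mul_nonneg ha ha) ht.le]
    calc r ≤ Real.sqrt (((1 + t) * a) ^ 2) := Real.sqrt_le_sqrt h1
    _ = (1 + t) * a := Real.sqrt_sq (by positivity)
  have hsle : s ≤ (1 + t) * c := by
    have h1 : c ^ 2 + d ^ 2 ≤ ((1 + t) * c) ^ 2 := by
      nlinarith [hd2, mul_nonneg (mul_nonneg hc hc) ht.le]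
    calc s ≤ Real.sqrt (((1 + t) * c) ^ 2) := Real.sqrt_le_sqrt h1
    _ = (1 + t) * c := Real.sqrt_sq (by positivity)
  -- step 1: |φ p - φ q| ≤ t * (|a - c| + |b - d|)
  have key : |r - a - (s - c)| ≤ t * (|a - c| + |b - d|) := by
    rcases eq_or_lt_of_le (by positivity : (0:ℝ) ≤ a + c) with h0 | h0
    · -- a + c = 0 : everything is zero
      have ha0 : a = 0 := by linarith
      have hc0 : c = 0 := by linarith
      have hb0 : b = 0 := by
        have : |b| ≤ 0 := by rw [ha0] at hb; simpa using hb
        simpa [abs_nonpos_iff] using this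
      have hd0 : d = 0 := by
        have : |d| ≤ 0 := by rw [hc0] at hd; simpa using hd
        simpa [abs_nonpos_iff] using this
      have hr00 : r = 0 := by rw [hrdef, ha0, hb0]; simp
      have hs00 : s = 0 := by rw [hsdef, hc0, hd0]; simp
      rw [hr00, hs00, ha0, hb0, hc0, hd0]
      simp
    · have hrs : 0 < r + s := by linarith
      have hident : (r - a - (s - c)) * (r + s) =
          (a - c) * ((a + c) - (r + s)) + (b - d) * (b + d) := by
        linear_combination hr2 - hs2
      have h1 : |(a + c) - (r + s)| ≤ t * (a + c) := by
        rw [abs_le]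
        constructor
        · nlinarith [hrle, hsle]
        · nlinarith [hra, hsc, mul_nonneg ht.le (le_of_lt h0)]
      have h2 : |b + d| ≤ t * (a + c) := by
        calc |b + d| ≤ |b| + |d| := abs_add_le _ _
        _ ≤ a * t + c * t := add_le_add hb hd
        _ = t * (a + c) := by ring
      have h3 : |r - a - (s - c)| * (r + s) ≤ t * (|a - c| + |b - d|) * (r + s) := by
        calc |r - a - (s - c)| * (r + s) = |(r - a - (s - c)) * (r + s)| := by
              rw [abs_mul, abs_of_pos hrs]
        _ = |(a - c) * ((a + c) - (r + s)) + (b - d) * (b + d)| := by rw [hident]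
        _ ≤ |a - c| * |(a + c) - (r + s)| + |b - d| * |b + d| := by
              calc _ ≤ |(a - c) * ((a + c) - (r + s))| + |(b - d) * (b + d)| := abs_add_le _ _
              _ = _ := by rw [abs_mul, abs_mul]
        _ ≤ |a - c| * (t * (a + c)) + |b - d| * (t * (a + c)) :=
              add_le_add (mul_le_mul_of_nonneg_left h1 (abs_nonneg _))
                (mul_le_mul_of_nonneg_left h2 (abs_nonneg _))
        _ = t * (|a - c| + |b - d|) * (a + c) := by ring
        _ ≤ t * (|a - c| + |b - d|) * (r + s) := by
              apply mul_le_mul_of_nonneg_left (by linarith)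
              positivity
      exact le_of_mul_le_mul_right (by linarith [h3]) hrs
  -- step 2: |a - c| + |b - d| ≤ √2 * √((a-c)² + (b-d)²)
  have step2 : |a - c| + |b - d| ≤ Real.sqrt 2 * Real.sqrt ((a - c) ^ 2 + (b - d) ^ 2) := by
    rw [← Real.sqrt_mul (by norm_num : (0:ℝ) ≤ 2)]
    rw [show |a - c| + |b - d| = Real.sqrt ((|a - c| + |b - d|) ^ 2) from
      (Real.sqrt_sq (by positivity)).symm]
    apply Real.sqrt_le_sqrt
    nlinarith [sq_nonneg (|a - c| - |b - d|), sq_abs (a - c), sq_abs (b - d)]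
  calc |r - a - (s - c)| ≤ t * (|a - c| + |b - d|) := key
  _ ≤ t * (Real.sqrt 2 * Real.sqrt ((a - c) ^ 2 + (b - d) ^ 2)) :=
      mul_le_mul_of_nonneg_left step2 ht.le
  _ = Real.sqrt 2 * t * Real.sqrt ((a - c) ^ 2 + (b - d) ^ 2) := by ring
end

section
/- Let M ⊆ ℝ^d be closed with nonempty boundary. Then dist(·, ∂M) is DC on ℝ^d if and only if both dist(·, M) and dist(·, closure(ℝ^d \ M)) are DC on ℝ^d. -/
open Set Metric

set_option linter.unusedSectionVars false

/-- chord inequality in multiplied form for convex functions on ℝ -/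
lemma conv_chord {φ : ℝ → ℝ} (hφ : ConvexOn ℝ Set.univ φ) {x z y : ℝ}
    (hxz : x ≤ z) (hzy : z ≤ y) :
    φ z * (y - x) ≤ (y - z) * φ x + (z - x) * φ y := by
  rcases eq_or_lt_of_le (hxz.trans hzy) with h | hxy
  · have hx : z = x := le_antisymm (h ▸ hzy) hxz
    subst hx; rw [← h]; ring_nf; exact le_refl _
  · set a := (y - z) / (y - x) with ha_def
    set b := (z - x) / (y - x) with hb_def
    have hyx : (0:ℝ) < y - x := sub_pos.2 hxy
    have ha : 0 ≤ a := div_nonneg (by linarith) hyx.le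
    have hb : 0 ≤ b := div_nonneg (by linarith) hyx.le
    have hab : a + b = 1 := by
      rw [ha_def, hb_def, ← add_div, div_eq_one_iff_eq hyx.ne']; ring
    have hz' : a • x + b • y = z := by
      rw [ha_def, hb_def, smul_eq_mul, smul_eq_mul]
      field_simp
      ring
    have h := hφ.2 (mem_univ x) (mem_univ y) ha hb hab
    rw [hz'] at h
    have h2 := mul_le_mul_of_nonneg_right h hyx.le
    have e1 : a * (y - x) = y - z := div_mul_cancel₀ _ hyx.ne'
    have e2 : b * (y - x) = z - x := div_mul_cancel₀ _ hyx.ne'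
    calc φ z * (y - x) ≤ (a • φ x + b • φ y) * (y - x) := h2
      _ = (y - z) * φ x + (z - x) * φ y := by
          simp only [smul_eq_mul]; linear_combination φ x * e1 + φ y * e2

section
variable {φ₁ φ₂ κ : ℝ → ℝ}

/-- chord bound at points where the two convex functions agree -/
lemma selA (h1 : ConvexOn ℝ Set.univ φ₁) (h2 : ConvexOn ℝ Set.univ φ₂)
    (hsel : ∀ t, κ t = φ₁ t ∨ κ t = φ₂ t)
    {x z y : ℝ} (hxz : x ≤ z) (hzy : z ≤ y) (hZ : φ₁ z = φ₂ z) :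
    (κ z + 2 * max (φ₁ z) (φ₂ z)) * (y - x) ≤
      (y - z) * (κ x + 2 * max (φ₁ x) (φ₂ x)) + (z - x) * (κ y + 2 * max (φ₁ y) (φ₂ y)) := by
  have hμ : ConvexOn ℝ Set.univ (fun t => max (φ₁ t) (φ₂ t)) := h1.sup h2
  have C1 := conv_chord h1 hxz hzy
  have C2 := conv_chord h2 hxz hzy
  have Cμ := conv_chord hμ hxz hzy
  have hκz : κ z = φ₁ z := by
    rcases hsel z with h | h
    · exact h
    · rw [h, hZ]
  have hμz : max (φ₁ z) (φ₂ z) = φ₁ z := by rw [hZ]; exact max_self _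
  have hyz : (0:ℝ) ≤ y - z := by linarith
  have hzx : (0:ℝ) ≤ z - x := by linarith
  have m1x : φ₁ x ≤ max (φ₁ x) (φ₂ x) := le_max_left _ _
  have m2x : φ₂ x ≤ max (φ₁ x) (φ₂ x) := le_max_right _ _
  have m1y : φ₁ y ≤ max (φ₁ y) (φ₂ y) := le_max_left _ _
  have m2y : φ₂ y ≤ max (φ₁ y) (φ₂ y) := le_max_right _ _
  rw [hκz, hμz]
  rcases hsel x with hx | hx <;> rcases hsel y with hy | hy <;> rw [hx, hy]
  · nlinarith [mul_le_mul_of_nonneg_left m1x hyz, mul_le_mul_of_nonneg_left m1y hzx]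
  · -- κ x = φ₁ x, κ y = φ₂ y : mixed
    nlinarith [mul_le_mul_of_nonneg_left m2x hyz, mul_le_mul_of_nonneg_left m1y hzx]
  · nlinarith [mul_le_mul_of_nonneg_left m1x hyz, mul_le_mul_of_nonneg_left m2y hzx]
  · nlinarith [mul_le_mul_of_nonneg_left m2x hyz, mul_le_mul_of_nonneg_left m2y hzx]
end

section
variable {φ₁ φ₂ κ : ℝ → ℝ}

/-- if there is no agreement point in `[z, β)` and the selection picks `φ₁` at `z`,
then it picks `φ₁` on all of `[z, β)` -/
lemma const_right (hc1 : Continuous φ₁) (hc2 : Continuous φ₂) (hκ : Continuous κ)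
    (hsel : ∀ t, κ t = φ₁ t ∨ κ t = φ₂ t)
    {z β : ℝ} (hnoZ : ∀ t, z ≤ t → t < β → φ₁ t ≠ φ₂ t) (hz : κ z = φ₁ z) :
    ∀ t, z ≤ t → t < β → κ t = φ₁ t := by
  intro t hzt htβ
  by_contra hne
  have hκt : κ t = φ₂ t := (hsel t).resolve_left hne
  set S : Set ℝ := {s : ℝ | s ∈ Icc z t ∧ κ s = φ₁ s} with hS_def
  have hS_closed : IsClosed S := (isClosed_Icc.inter (isClosed_eq hκ hc1) : IsClosed (Icc z t ∩ {s | κ s = φ₁ s}))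
  have hS_ne : S.Nonempty := ⟨z, ⟨le_refl _, hzt⟩, hz⟩
  have hS_bdd : BddAbove S := ⟨t, fun s hs => hs.1.2⟩
  set c := sSup S with hc_def
  have hcS : c ∈ S := hS_closed.csSup_mem hS_ne hS_bdd
  have hzc : z ≤ c := hcS.1.1
  have hct : c ≤ t := hcS.1.2
  have hcne : c ≠ t := by
    intro h
    rw [h] at hcS
    exact hnoZ t hzt htβ (hcS.2.symm.trans hκt)
  have hclt : c < t := lt_of_le_of_ne hct hcne
  have h2 : ∀ s ∈ Ioc c t, κ s = φ₂ s := by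
    intro s hs
    rcases hsel s with h | h
    · exfalso
      have : s ∈ S := ⟨⟨hzc.trans hs.1.le, hs.2⟩, h⟩
      exact absurd (le_csSup hS_bdd this) (not_le.2 hs.1)
    · exact h
  have h3 : κ c = φ₂ c := by
    have hsub : Icc c t ⊆ {s | κ s = φ₂ s} := by
      rw [← closure_Ioc hclt.ne]
      exact closure_minimal h2 (isClosed_eq hκ hc2)
    exact hsub ⟨le_refl _, hct⟩
  exact hnoZ c hzc (lt_of_lt_of_le hclt htβ.le) (hcS.2.symm.trans h3)
end

section
variable {φ₁ φ₂ κ : ℝ → ℝ}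

lemma key_aux (h1 : ConvexOn ℝ Set.univ φ₁) (h2 : ConvexOn ℝ Set.univ φ₂)
    (hc1 : Continuous φ₁) (hc2 : Continuous φ₂) (hκ : Continuous κ)
    (hsel : ∀ t, κ t = φ₁ t ∨ κ t = φ₂ t)
    {x z y : ℝ} (hxz : x < z) (hzy : z < y) (hZne : φ₁ z ≠ φ₂ z) (hκz : κ z = φ₁ z) :
    (κ z + 2 * max (φ₁ z) (φ₂ z)) * (y - x) ≤
      (y - z) * (κ x + 2 * max (φ₁ x) (φ₂ x)) + (z - x) * (κ y + 2 * max (φ₁ y) (φ₂ y)) := by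
  have hμ : ConvexOn ℝ Set.univ (fun t => max (φ₁ t) (φ₂ t)) := h1.sup h2
  set Aα : Set ℝ := insert x {t : ℝ | t ∈ Icc x z ∧ φ₁ t = φ₂ t} with hAα_def
  set Aβ : Set ℝ := insert y {t : ℝ | t ∈ Icc z y ∧ φ₁ t = φ₂ t} with hAβ_def
  have hAα_closed : IsClosed Aα := by
    rw [hAα_def, insert_eq]
    exact isClosed_singleton.union (isClosed_Icc.inter (isClosed_eq hc1 hc2) :
      IsClosed (Icc x z ∩ {t | φ₁ t = φ₂ t}))
  have hAβ_closed : IsClosed Aβ := by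
    rw [hAβ_def, insert_eq]
    exact isClosed_singleton.union (isClosed_Icc.inter (isClosed_eq hc1 hc2) :
      IsClosed (Icc z y ∩ {t | φ₁ t = φ₂ t}))
  have hAα_ne : Aα.Nonempty := ⟨x, mem_insert _ _⟩
  have hAβ_ne : Aβ.Nonempty := ⟨y, mem_insert _ _⟩
  have hAα_bdd : BddAbove Aα := by
    refine ⟨z, ?_⟩
    rintro t (rfl | ht)
    · exact hxz.le
    · exact ht.1.2
  have hAβ_bddb : BddBelow Aβ := by
    refine ⟨z, ?_⟩
    rintro t (rfl | ht)
    · exact hzy.le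
    · exact ht.1.1
  set α := sSup Aα with hα_def
  set β := sInf Aβ with hβ_def
  have hαmem : α ∈ Aα := hAα_closed.csSup_mem hAα_ne hAα_bdd
  have hβmem : β ∈ Aβ := hAβ_closed.csInf_mem hAβ_ne hAβ_bddb
  have hxα : x ≤ α := le_csSup hAα_bdd (mem_insert _ _)
  have hβy : β ≤ y := csInf_le hAβ_bddb (mem_insert _ _)
  have hαz : α ≤ z := csSup_le hAα_ne (by
    rintro t (rfl | ht)
    · exact hxz.le
    · exact ht.1.2)
  have hzβ : z ≤ β := le_csInf hAβ_ne (by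
    rintro t (rfl | ht)
    · exact hzy.le
    · exact ht.1.1)
  have hαltz : α < z := by
    rcases lt_or_eq_of_le hαz with h | h
    · exact h
    · exfalso
      rcases hαmem with h' | h'
      · rw [h] at h'; exact absurd h'.symm (ne_of_lt hxz)
      · exact hZne (h ▸ h'.2)
  have hzltβ : z < β := by
    rcases lt_or_eq_of_le hzβ with h | h
    · exact h
    · exfalso
      rcases hβmem with h' | h'
      · rw [← h] at h'; exact absurd h' (ne_of_lt hzy)
      · exact hZne (h ▸ h'.2)
  have hαβ : α < β := hαltz.trans hzltβ
  have hnoZ : ∀ t, α < t → t < β → φ₁ t ≠ φ₂ t := by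
    intro t hαt htβ heq
    rcases le_or_gt t z with h | h
    · have : t ∈ Aα := Or.inr ⟨⟨(hxα.trans hαt.le), h⟩, heq⟩
      exact absurd (le_csSup hAα_bdd this) (not_le.2 hαt)
    · have : t ∈ Aβ := Or.inr ⟨⟨h.le, (htβ.trans_le hβy).le⟩, heq⟩
      exact absurd (csInf_le hAβ_bddb this) (not_le.2 htβ)
  -- selection is φ₁ on (α, β)
  have hconst_r : ∀ t, z ≤ t → t < β → κ t = φ₁ t :=
    const_right hc1 hc2 hκ hsel (fun t h h' => hnoZ t (hαltz.trans_le h) h') hκz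
  have hconst_l : ∀ t, α < t → t ≤ z → κ t = φ₁ t := by
    have hrefl := const_right (φ₁ := fun s => φ₁ (-s)) (φ₂ := fun s => φ₂ (-s))
      (κ := fun s => κ (-s)) (hc1.comp continuous_neg) (hc2.comp continuous_neg)
      (hκ.comp continuous_neg) (fun s => hsel (-s)) (z := -z) (β := -α)
      (by
        intro t h h' heq
        exact hnoZ (-t) (by linarith) (by linarith [hzltβ]) heq)
      (by simpa using hκz)
    intro t hαt htz
    have := hrefl (-t) (by linarith) (by linarith)
    simpa using this
  have hconst : ∀ t, α < t → t < β → κ t = φ₁ t := by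
    intro t h h'
    rcases le_or_gt t z with hh | hh
    · exact hconst_l t h hh
    · exact hconst_r t hh.le h'
  have hsub : Icc α β ⊆ {t | κ t = φ₁ t} := by
    rw [← closure_Ioo hαβ.ne]
    refine closure_minimal ?_ (isClosed_eq hκ hc1)
    intro t ht
    exact hconst t ht.1 ht.2
  have hκα : κ α = φ₁ α := hsub ⟨le_refl _, hαβ.le⟩
  have hκβ : κ β = φ₁ β := hsub ⟨hαβ.le, le_refl _⟩
  -- chord bounds at α and β against [x, y]
  have hαy : α ≤ y := hαz.trans hzy.le
  have hxβ : x ≤ β := hxz.le.trans hzβ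
  have Iα : (κ α + 2 * max (φ₁ α) (φ₂ α)) * (y - x) ≤
      (y - α) * (κ x + 2 * max (φ₁ x) (φ₂ x)) + (α - x) * (κ y + 2 * max (φ₁ y) (φ₂ y)) := by
    rcases hαmem with h | h
    · rw [h]; ring_nf; exact le_refl _
    · exact selA h1 h2 hsel hxα hαy h.2
  have Iβ : (κ β + 2 * max (φ₁ β) (φ₂ β)) * (y - x) ≤
      (y - β) * (κ x + 2 * max (φ₁ x) (φ₂ x)) + (β - x) * (κ y + 2 * max (φ₁ y) (φ₂ y)) := by
    rcases hβmem with h | h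
    · rw [h]; ring_nf; exact le_refl _
    · exact selA h1 h2 hsel hxβ hβy h.2
  -- chord over [α, β] for the fixed branch
  have Cφ := conv_chord h1 hαz hzβ
  have Cμ := conv_chord hμ hαz hzβ
  have J : (κ z + 2 * max (φ₁ z) (φ₂ z)) * (β - α) ≤
      (β - z) * (κ α + 2 * max (φ₁ α) (φ₂ α)) + (z - α) * (κ β + 2 * max (φ₁ β) (φ₂ β)) := by
    rw [hκz, hκα, hκβ]
    linarith [Cφ, Cμ]
  have P1 := mul_le_mul_of_nonneg_right J (by linarith : (0:ℝ) ≤ y - x)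
  have P2 := mul_le_mul_of_nonneg_left Iα (by linarith : (0:ℝ) ≤ β - z)
  have P3 := mul_le_mul_of_nonneg_left Iβ (by linarith : (0:ℝ) ≤ z - α)
  have K : ((κ z + 2 * max (φ₁ z) (φ₂ z)) * (y - x)) * (β - α) ≤
      ((y - z) * (κ x + 2 * max (φ₁ x) (φ₂ x)) + (z - x) * (κ y + 2 * max (φ₁ y) (φ₂ y))) * (β - α) := by
    linarith [P1, P2, P3]
  exact le_of_mul_le_mul_right K (by linarith)
end

section
variable {φ₁ φ₂ κ : ℝ → ℝ}

lemma key_chord (h1 : ConvexOn ℝ Set.univ φ₁) (h2 : ConvexOn ℝ Set.univ φ₂)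
    (hc1 : Continuous φ₁) (hc2 : Continuous φ₂) (hκ : Continuous κ)
    (hsel : ∀ t, κ t = φ₁ t ∨ κ t = φ₂ t)
    {x z y : ℝ} (hxz : x ≤ z) (hzy : z ≤ y) :
    (κ z + 2 * max (φ₁ z) (φ₂ z)) * (y - x) ≤
      (y - z) * (κ x + 2 * max (φ₁ x) (φ₂ x)) + (z - x) * (κ y + 2 * max (φ₁ y) (φ₂ y)) := by
  by_cases hZ : φ₁ z = φ₂ z
  · exact selA h1 h2 hsel hxz hzy hZ
  rcases eq_or_lt_of_le hxz with h | hxz'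
  · rw [← h]; ring_nf; exact le_refl _
  rcases eq_or_lt_of_le hzy with h | hzy'
  · rw [h]; ring_nf; exact le_refl _
  rcases hsel z with hκz | hκz
  · exact key_aux h1 h2 hc1 hc2 hκ hsel hxz' hzy' hZ hκz
  · have H := key_aux h2 h1 hc2 hc1 hκ (fun t => (hsel t).symm) hxz' hzy'
      (Ne.symm hZ) hκz
    rw [max_comm (φ₂ z) (φ₁ z), max_comm (φ₂ x) (φ₁ x), max_comm (φ₂ y) (φ₁ y)] at H
    exact H

lemma key1d (h1 : ConvexOn ℝ Set.univ φ₁) (h2 : ConvexOn ℝ Set.univ φ₂)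
    (hc1 : Continuous φ₁) (hc2 : Continuous φ₂) (hκ : Continuous κ)
    (hsel : ∀ t, κ t = φ₁ t ∨ κ t = φ₂ t) :
    ConvexOn ℝ Set.univ (fun t => κ t + 2 * max (φ₁ t) (φ₂ t)) := by
  refine ⟨convex_univ, ?_⟩
  intro x _ y _ a b ha hb hab
  simp only [smul_eq_mul]
  rcases eq_or_ne x y with rfl | hne
  · have hz : a * x + b * x = x := by linear_combination x * hab
    rw [hz]
    have e : a * (κ x + 2 * max (φ₁ x) (φ₂ x)) + b * (κ x + 2 * max (φ₁ x) (φ₂ x))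
        = κ x + 2 * max (φ₁ x) (φ₂ x) := by linear_combination (κ x + 2 * max (φ₁ x) (φ₂ x)) * hab
    linarith [e]
  rcases lt_or_gt_of_ne hne with hxy | hyx
  · set z := a * x + b * y with hz_def
    have e1 : y - z = a * (y - x) := by rw [hz_def]; linear_combination (-y) * hab
    have e2 : z - x = b * (y - x) := by rw [hz_def]; linear_combination x * hab
    have hxz : x ≤ z := by linarith [mul_nonneg hb (sub_nonneg.2 hxy.le)]
    have hzy : z ≤ y := by linarith [mul_nonneg ha (sub_nonneg.2 hxy.le)]
    have H := key_chord h1 h2 hc1 hc2 hκ hsel hxz hzy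
    rw [e1, e2] at H
    have K : (κ z + 2 * max (φ₁ z) (φ₂ z)) * (y - x) ≤
        (a * (κ x + 2 * max (φ₁ x) (φ₂ x)) + b * (κ y + 2 * max (φ₁ y) (φ₂ y))) * (y - x) := by
      linarith [H]
    exact le_of_mul_le_mul_right K (sub_pos.2 hxy)
  · set z := a * x + b * y with hz_def
    have e1 : x - z = b * (x - y) := by rw [hz_def]; linear_combination (-x) * hab
    have e2 : z - y = a * (x - y) := by rw [hz_def]; linear_combination y * hab
    have hyz : y ≤ z := by linarith [mul_nonneg ha (sub_nonneg.2 hyx.le)]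
    have hzx : z ≤ x := by linarith [mul_nonneg hb (sub_nonneg.2 hyx.le)]
    have H := key_chord h1 h2 hc1 hc2 hκ hsel hyz hzx
    rw [e1, e2] at H
    have K : (κ z + 2 * max (φ₁ z) (φ₂ z)) * (x - y) ≤
        (a * (κ x + 2 * max (φ₁ x) (φ₂ x)) + b * (κ y + 2 * max (φ₁ y) (φ₂ y))) * (x - y) := by
      linarith [H]
    exact le_of_mul_le_mul_right K (sub_pos.2 hyx)
end

section
variable {E : Type*} [NormedAddCommGroup E] [NormedSpace ℝ E]

lemma keyND {g₁ g₂ k : E → ℝ} (hg₁ : ConvexOn ℝ Set.univ g₁) (hg₂ : ConvexOn ℝ Set.univ g₂)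
    (hc₁ : Continuous g₁) (hc₂ : Continuous g₂) (hk : Continuous k)
    (hsel : ∀ x, k x = g₁ x ∨ k x = g₂ x) :
    ConvexOn ℝ Set.univ (fun x => k x + 2 * max (g₁ x) (g₂ x)) := by
  refine ⟨convex_univ, ?_⟩
  intro x _ y _ a b ha hb hab
  set p : ℝ →ᵃ[ℝ] E := AffineMap.lineMap x y with hp_def
  have hpc : Continuous p := AffineMap.lineMap_continuous
  have hφ₁ : ConvexOn ℝ Set.univ (fun t : ℝ => g₁ (p t)) := by
    have := hg₁.comp_affineMap p
    exact this
  have hφ₂ : ConvexOn ℝ Set.univ (fun t : ℝ => g₂ (p t)) := by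
    have := hg₂.comp_affineMap p
    exact this
  have H := (key1d hφ₁ hφ₂ (hc₁.comp hpc) (hc₂.comp hpc) (hk.comp hpc)
    (fun t => hsel (p t))).2 (mem_univ (0:ℝ)) (mem_univ (1:ℝ)) ha hb hab
  simp only [Function.comp_apply, smul_eq_mul, mul_zero, mul_one, zero_add] at H
  have hp0 : p 0 = x := AffineMap.lineMap_apply_zero x y
  have hp1 : p 1 = y := AffineMap.lineMap_apply_one x y
  have hpb : p b = a • x + b • y := by
    rw [hp_def, AffineMap.lineMap_apply]
    have hba : a = 1 - b := by linarith
    simp only [vsub_eq_sub, vadd_eq_add]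
    rw [hba, smul_sub, sub_smul, one_smul]
    abel
  rw [hp0, hp1, hpb] at H
  simp only [smul_eq_mul]
  exact H

lemma mixing [FiniteDimensional ℝ E] {f₁ f₂ k : E → ℝ}
    (hd1 : IsDCOn Set.univ f₁) (hd2 : IsDCOn Set.univ f₂)
    (hk : Continuous k) (hsel : ∀ x, k x = f₁ x ∨ k x = f₂ x) : IsDCOn Set.univ k := by
  obtain ⟨g₁, h₁, hg₁, hh₁, he₁⟩ := hd1
  obtain ⟨g₂, h₂, hg₂, hh₂, he₂⟩ := hd2
  have cont : ∀ {f : E → ℝ}, ConvexOn ℝ Set.univ f → Continuous f := by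
    intro f hf
    rw [← continuousOn_univ]
    exact hf.continuousOn isOpen_univ
  set G₁ : E → ℝ := fun x => g₁ x + h₂ x with hG₁
  set G₂ : E → ℝ := fun x => g₂ x + h₁ x with hG₂
  set H : E → ℝ := fun x => h₁ x + h₂ x with hH
  have hG₁c : ConvexOn ℝ Set.univ G₁ := hg₁.add hh₂
  have hG₂c : ConvexOn ℝ Set.univ G₂ := hg₂.add hh₁
  have hHc : ConvexOn ℝ Set.univ H := hh₁.add hh₂
  have hsel' : ∀ x, k x + H x = G₁ x ∨ k x + H x = G₂ x := by
    intro x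
    rcases hsel x with h | h
    · left; rw [h, he₁ x (mem_univ x), hG₁, hH]; ring
    · right; rw [h, he₂ x (mem_univ x), hG₂, hH]; ring
  have hkH : Continuous (fun x => k x + H x) := hk.add (cont hHc)
  have hmain := keyND hG₁c hG₂c (cont hG₁c) (cont hG₂c) hkH hsel'
  refine ⟨fun x => (k x + H x) + 2 * max (G₁ x) (G₂ x),
    fun x => H x + 2 * max (G₁ x) (G₂ x), hmain, hHc.add ((hG₁c.sup hG₂c).smul (by norm_num : (0:ℝ) ≤ 2)), ?_⟩
  intro x _
  ring
end

section
variable {E : Type*} [NormedAddCommGroup E] [NormedSpace ℝ E]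

lemma le_infDist' {s : Set E} {x : E} {b : ℝ} (hs : s.Nonempty)
    (h : ∀ y ∈ s, b ≤ dist x y) : b ≤ infDist x s := by
  by_contra hlt
  push_neg at hlt
  obtain ⟨y, hy, hd⟩ := (infDist_lt_iff hs).1 hlt
  exact absurd (h y hy) (not_le.2 hd)

/-- a segment from a point of `S` to a point outside `S` meets the frontier at distance
at most `dist x y` from `x`. -/
lemma cross {S : Set E} {x y : E} (hx : x ∈ S) (hy : y ∉ S) :
    ∃ z ∈ frontier S, dist x z ≤ dist x y := by
  set p : ℝ → E := fun t => x + t • (y - x) with hp_def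
  have hpc : Continuous p := continuous_const.add (continuous_id.smul continuous_const)
  have hp0 : p 0 = x := by simp [hp_def]
  have hp1 : p 1 = y := by simp [hp_def]
  set T : Set ℝ := Icc 0 1 ∩ p ⁻¹' (closure S) with hT_def
  have hT_closed : IsClosed T := isClosed_Icc.inter (isClosed_closure.preimage hpc)
  have hT_ne : T.Nonempty := ⟨0, ⟨le_refl _, zero_le_one⟩, by
    rw [mem_preimage, hp0]; exact subset_closure hx⟩
  have hT_bdd : BddAbove T := ⟨1, fun t ht => ht.1.2⟩
  set c := sSup T with hc_def
  have hcT : c ∈ T := hT_closed.csSup_mem hT_ne hT_bdd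
  have hc0 : 0 ≤ c := hcT.1.1
  have hc1 : c ≤ 1 := hcT.1.2
  refine ⟨p c, ?_, ?_⟩
  · rw [frontier_eq_closure_inter_closure]
    refine ⟨hcT.2, ?_⟩
    rcases eq_or_lt_of_le hc1 with h | h
    · have : p c = y := by rw [h, hp1]
      rw [this]
      exact subset_closure hy
    · have hsub : Ioc c 1 ⊆ p ⁻¹' Sᶜ := by
        intro t ht
        have htT : t ∉ T := fun hmem => absurd (le_csSup hT_bdd hmem) (not_le.2 ht.1)
        have : p t ∉ closure S := by
          intro hcl
          exact htT ⟨⟨hc0.trans ht.1.le, ht.2⟩, hcl⟩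
        exact fun hmem => this (subset_closure hmem)
      have hcc : c ∈ closure (Ioc c 1) := by
        rw [closure_Ioc h.ne]
        exact ⟨le_refl _, hc1⟩
      have : p c ∈ closure (p '' Ioc c 1) := by
        have := image_closure_subset_closure_image (f := p) hpc (s := Ioc c 1)
        exact this ⟨c, hcc, rfl⟩
      refine closure_mono ?_ this
      rintro _ ⟨t, ht, rfl⟩
      exact hsub ht
  · have : dist x (p c) = c * dist x y := by
      rw [hp_def, dist_eq_norm, dist_eq_norm]
      simp only
      rw [show x - (x + c • (y - x)) = -(c • (y - x)) by abel, norm_neg, norm_smul,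
        Real.norm_eq_abs, abs_of_nonneg hc0, show x - y = -(y - x) by abel, norm_neg]
    rw [this]
    nlinarith [dist_nonneg (x := x) (y := y)]

lemma sum_id {M : Set E} (hM : IsClosed M) (hb : (frontier M).Nonempty) (x : E) :
    infDist x (frontier M) = infDist x M + infDist x (closure Mᶜ) := by
  have hMne : M.Nonempty := by
    obtain ⟨z, hz⟩ := hb
    exact ⟨z, hM.closure_eq ▸ frontier_subset_closure hz⟩
  have hMc_ne : Mᶜ.Nonempty := by
    by_contra h
    rw [not_nonempty_iff_eq_empty, compl_empty_iff] at h
    rw [h, frontier_univ] at hb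
    exact absurd hb not_nonempty_empty
  have hfM : frontier M ⊆ M := hM.frontier_subset
  have hfMc : frontier M ⊆ closure Mᶜ := by
    rw [frontier_eq_closure_inter_closure]
    exact inter_subset_right
  by_cases hx : x ∈ M
  · rw [infDist_zero_of_mem hx, zero_add]
    refine le_antisymm ?_ (infDist_le_infDist_of_subset hfMc hb)
    rw [infDist_closure]
    refine le_infDist' hMc_ne ?_
    intro y hy
    obtain ⟨z, hz, hdz⟩ := cross hx hy
    exact (infDist_le_dist_of_mem hz).trans hdz
  · rw [infDist_zero_of_mem (subset_closure (mem_compl hx)), add_zero]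
    refine le_antisymm ?_ (infDist_le_infDist_of_subset hfM hb)
    refine le_infDist' hMne ?_
    intro y hy
    obtain ⟨z, hz, hdz⟩ := cross (S := Mᶜ) hx (by simpa using hy)
    rw [frontier_compl] at hz
    exact (infDist_le_dist_of_mem hz).trans hdz
end

theorem stmt_11 (d : ℕ) (M : Set (EuclideanSpace ℝ (Fin d)))
    (hM : IsClosed M) (hb : (frontier M).Nonempty) :
    IsDCOn Set.univ (fun x => Metric.infDist x (frontier M)) ↔
      (IsDCOn Set.univ (fun x => Metric.infDist x M) ∧
       IsDCOn Set.univ (fun x => Metric.infDist x (closure Mᶜ))) := by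
  constructor
  · intro hf
    have hzero : IsDCOn Set.univ (fun _ : EuclideanSpace ℝ (Fin d) => (0:ℝ)) :=
      ⟨fun _ => 0, fun _ => 0, convexOn_const 0 convex_univ, convexOn_const 0 convex_univ,
        fun x _ => by ring⟩
    have hsel : ∀ x : EuclideanSpace ℝ (Fin d),
        infDist x M = (0:ℝ) ∨ infDist x M = infDist x (frontier M) := by
      intro x
      by_cases hx : x ∈ M
      · exact Or.inl (infDist_zero_of_mem hx)
      · right
        have h0 : infDist x (closure Mᶜ) = 0 := infDist_zero_of_mem (subset_closure (mem_compl hx))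
        have := sum_id hM hb x
        rw [h0, add_zero] at this
        exact this.symm
    have ha : IsDCOn Set.univ (fun x => infDist x M) :=
      mixing hzero hf (continuous_infDist_pt M) hsel
    refine ⟨ha, ?_⟩
    obtain ⟨g, h, hg, hh, he⟩ := hf
    obtain ⟨g', h', hg', hh', he'⟩ := ha
    refine ⟨fun x => g x + h' x, fun x => h x + g' x, hg.add hh', hh.add hg', ?_⟩
    intro x _
    have hs := sum_id hM hb x
    have h1 := he x (mem_univ x)
    have h2 := he' x (mem_univ x)
    simp only at h1 h2 hs
    show infDist x (closure Mᶜ) = (g x + h' x) - (h x + g' x)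
    linarith
  · rintro ⟨ha, hb'⟩
    obtain ⟨g, h, hg, hh, he⟩ := ha
    obtain ⟨g', h', hg', hh', he'⟩ := hb'
    refine ⟨fun x => g x + g' x, fun x => h x + h' x, hg.add hg', hh.add hh', ?_⟩
    intro x _
    have hs := sum_id hM hb x
    have h1 := he x (mem_univ x)
    have h2 := he' x (mem_univ x)
    simp only at h1 h2 hs
    show infDist x (frontier M) = (g x + g' x) - (h x + h' x)
    linarith
end

section
/- If A ⊆ ℝ^d is a nonempty set with positive reach, then the distance functions of closure(ℝ^d \ A) and of ∂A are both DC on ℝ^d. -/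
open Metric Set
open scoped RealInnerProductSpace

/-- `reach A a`: the supremum of radii `r` such that every point of the open
ball `U(a, r)` has a unique nearest point in `A`. -/
noncomputable def reachAt {E : Type*} [NormedAddCommGroup E] [NormedSpace ℝ E]
    (A : Set E) (a : E) : ENNReal :=
  sSup {r : ENNReal | ∀ z : E, edist z a < r →
    ∃! p : E, p ∈ A ∧ dist z p = infDist z A}

/-- The reach of a set `A`. -/
noncomputable def reach {E : Type*} [NormedAddCommGroup E] [NormedSpace ℝ E]
    (A : Set E) : ENNReal :=
  ⨅ a ∈ A, reachAt A a

lemma le_infDist_of {α : Type*} [PseudoMetricSpace α] {s : Set α} (hs : s.Nonempty)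
    {x : α} {c : ℝ} (h : ∀ y ∈ s, c ≤ dist x y) : c ≤ infDist x s := by
  by_contra hlt
  push_neg at hlt
  obtain ⟨y, hy, hd⟩ := (infDist_lt_iff hs).1 hlt
  exact absurd (h y hy) (not_le.2 hd)

noncomputable def psiAux (s t : ℝ) : ℝ := if t ≤ s then t^2/(2*s) + s/2 else t

lemma psiAux_mono {s : ℝ} (hs : 0 < s) {t u : ℝ} (ht : 0 ≤ t) (h : t ≤ u) :
    psiAux s t ≤ psiAux s u := by
  have h2s : (0:ℝ) < 2*s := by linarith
  unfold psiAux
  split_ifs with h1 h2 h2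
  · have : t^2/(2*s) ≤ u^2/(2*s) := by
      apply div_le_div_of_nonneg_right ?_ h2s.le
      nlinarith
    linarith
  · have : t^2/(2*s) ≤ s^2/(2*s) := by
      apply div_le_div_of_nonneg_right ?_ h2s.le
      nlinarith
    have hss : s^2/(2*s) = s/2 := by field_simp; try ring
    push_neg at h2
    nlinarith
  · push_neg at h1
    have : u^2/(2*s) ≥ s^2/(2*s) := by
      apply div_le_div_of_nonneg_right ?_ h2s.le
      nlinarith
    have hss : s^2/(2*s) = s/2 := by field_simp; try ring
    nlinarith
  · exact h

lemma psiAux_lip {s : ℝ} (hs : 0 < s) {t e : ℝ} (ht : 0 ≤ t) (he : 0 ≤ e) :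
    psiAux s (t + e) ≤ psiAux s t + e := by
  have h2s : (0:ℝ) < 2*s := by linarith
  unfold psiAux
  split_ifs with h1 h2 h2
  · have h3 : (t+e)^2/(2*s) ≤ (t^2 + e*(2*s))/(2*s) := by
      apply div_le_div_of_nonneg_right ?_ h2s.le
      nlinarith
    have h4 : (t^2 + e*(2*s))/(2*s) = t^2/(2*s) + e := by field_simp
    linarith
  · nlinarith
  · -- t + e > s, t ≤ s : goal t + e ≤ t^2/(2s) + s/2 + e
    have h5 : (t-s)^2/(2*s) = t^2/(2*s) + s/2 - t := by field_simp; try ring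
    have h4 : 0 ≤ (t - s)^2 / (2*s) := by positivity
    linarith
  · linarith

lemma psiAux_eq {s t : ℝ} (hs : 0 < s) (h : s ≤ t) : psiAux s t = t := by
  unfold psiAux
  split_ifs with h1
  · have : t = s := le_antisymm h1 h
    subst this
    field_simp
    ring
  · rfl

lemma psiAux_le {s t : ℝ} (hs : 0 < s) (h0 : 0 ≤ t) (h : t ≤ s) : psiAux s t ≤ s := by
  have h2s : (0:ℝ) < 2*s := by linarith
  unfold psiAux
  split_ifs with h1
  · have : t^2/(2*s) ≤ s^2/(2*s) := by
      apply div_le_div_of_nonneg_right ?_ h2s.le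
      nlinarith
    have hss : s^2/(2*s) = s/2 := by field_simp; try ring
    linarith

lemma psiAux_nonneg {s t : ℝ} (hs : 0 < s) (h0 : 0 ≤ t) : 0 ≤ psiAux s t := by
  unfold psiAux
  split_ifs with h1
  · positivity
  · exact h0

variable {E : Type*} [NormedAddCommGroup E] [InnerProductSpace ℝ E]

lemma convexOn_normsq_div {s : ℝ} (hs : 0 < s) :
    ConvexOn ℝ (univ : Set E) (fun x => ‖x‖^2/(2*s)) := by
  refine ⟨convex_univ, fun x _ z _ a b ha hb hab => ?_⟩
  simp only [smul_eq_mul]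
  have hexp : ‖a • x + b • z‖^2 = a^2*‖x‖^2 + 2*(a*b*⟪x, z⟫) + b^2*‖z‖^2 := by
    rw [norm_add_sq_real, real_inner_smul_left, real_inner_smul_right, norm_smul, norm_smul,
      Real.norm_eq_abs, Real.norm_eq_abs, abs_of_nonneg ha, abs_of_nonneg hb]
    ring
  have hcs : ⟪x, z⟫ ≤ ‖x‖ * ‖z‖ := real_inner_le_norm x z
  have key : ‖a • x + b • z‖^2 ≤ a*‖x‖^2 + b*‖z‖^2 := by
    nlinarith [sq_nonneg (‖x‖ - ‖z‖), mul_nonneg ha hb, sq_nonneg (a - b)]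
  calc ‖a • x + b • z‖^2/(2*s) ≤ (a*‖x‖^2 + b*‖z‖^2)/(2*s) :=
        div_le_div_of_nonneg_right key (by positivity)
    _ = a * (‖x‖^2/(2*s)) + b * (‖z‖^2/(2*s)) := by ring

lemma convexOn_single {s : ℝ} (hs : 0 < s) (y : E) :
    ConvexOn ℝ (univ : Set E) (fun x => (2*⟪x, y⟫ - ‖y‖^2)/(2*s)
      + (max (dist x y - s) 0)^2/(2*s) - s/2) := by
  have h1 : ConvexOn ℝ (univ : Set E) (fun x => (2*⟪x, y⟫ - ‖y‖^2)/(2*s)) := by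
    refine ⟨convex_univ, fun x _ z _ a b ha hb hab => ?_⟩
    simp only [smul_eq_mul]
    rw [inner_add_left, real_inner_smul_left, real_inner_smul_left]
    apply le_of_eq
    have hb' : b = 1 - a := by linarith
    subst hb'
    ring
  have hmax : ConvexOn ℝ (univ : Set E) (fun x => max (dist x y - s) 0) := by
    have hd : ConvexOn ℝ (univ : Set E) (fun x => dist x y - s) := by
      simpa [sub_eq_add_neg, Pi.add_def] using (convexOn_dist y convex_univ).add_const (-s)
    have h := hd.sup (convexOn_const 0 convex_univ)
    have e : (fun x : E => max (dist x y - s) 0)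
        = ((fun x => dist x y - s) ⊔ (fun _ => 0)) := by
      funext w
      rw [Pi.sup_apply]
    rw [e]
    exact h
  have h2 : ConvexOn ℝ (univ : Set E) (fun x => (max (dist x y - s) 0)^2/(2*s)) := by
    refine ⟨convex_univ, fun x _ z _ a b ha hb hab => ?_⟩
    simp only [smul_eq_mul]
    set u := max (dist x y - s) 0 with hu
    set v := max (dist z y - s) 0 with hv
    have h0u : 0 ≤ u := le_max_right _ _
    have h0v : 0 ≤ v := le_max_right _ _
    have hmid : max (dist (a • x + b • z) y - s) 0 ≤ a * u + b * v := by
      have := hmax.2 (mem_univ x) (mem_univ z) ha hb hab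
      simpa [smul_eq_mul] using this
    have h0m : 0 ≤ max (dist (a • x + b • z) y - s) 0 := le_max_right _ _
    have hsq : (max (dist (a • x + b • z) y - s) 0)^2 ≤ a * u^2 + b * v^2 := by
      nlinarith [sq_nonneg (u - v), mul_nonneg ha hb]
    calc (max (dist (a • x + b • z) y - s) 0)^2/(2*s) ≤ (a * u^2 + b * v^2)/(2*s) :=
          div_le_div_of_nonneg_right hsq (by positivity)
      _ = a * (u^2/(2*s)) + b * (v^2/(2*s)) := by ring
  simpa [sub_eq_add_neg, Pi.add_def] using ((h1.add h2).add_const (-(s/2)))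

lemma single_rep {s : ℝ} (hs : 0 < s) (y x : E) :
    ‖x‖^2/(2*s) - psiAux s (dist x y)
      = (2*⟪x, y⟫ - ‖y‖^2)/(2*s) + (max (dist x y - s) 0)^2/(2*s) - s/2 := by
  have hd : dist x y = ‖x - y‖ := dist_eq_norm x y
  have hexp : ‖x - y‖^2 = ‖x‖^2 - 2*⟪x, y⟫ + ‖y‖^2 := by
    rw [norm_sub_sq_real]
  unfold psiAux
  split_ifs with h1
  · rw [max_eq_right (by linarith : dist x y - s ≤ 0), hd, hexp]
    ring
  · push_neg at h1
    rw [max_eq_left (by linarith : (0:ℝ) ≤ dist x y - s), hd]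
    field_simp
    nlinarith [hexp]

lemma dc_max_infDist_sub (Y : Set E) (hY : Y.Nonempty) {s : ℝ} (hs : 0 < s) :
    ∃ G H : E → ℝ, ConvexOn ℝ (univ : Set E) G ∧ ConvexOn ℝ (univ : Set E) H ∧
      ∀ x, max (infDist x Y - s) 0 = G x - H x := by
  set k : E → ℝ := fun x => ‖x‖^2/(2*s) - psiAux s (infDist x Y) with hk
  have hsingle : ∀ (y : E),
      ConvexOn ℝ (univ : Set E) (fun x => ‖x‖^2/(2*s) - psiAux s (dist x y)) := by
    intro y
    have h := convexOn_single hs (E := E) y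
    have e : (fun x : E => ‖x‖^2/(2*s) - psiAux s (dist x y))
        = (fun x => (2*⟪x, y⟫ - ‖y‖^2)/(2*s) + (max (dist x y - s) 0)^2/(2*s) - s/2) :=
      funext fun x => single_rep hs y x
    rw [e]; exact h
  have hkconv : ConvexOn ℝ (univ : Set E) k := by
    refine ⟨convex_univ, fun x _ z _ a b ha hb hab => ?_⟩
    simp only [smul_eq_mul]
    apply le_of_forall_pos_le_add
    intro δ hδ
    obtain ⟨y, hy, hyd⟩ := (infDist_lt_iff hY).1
      (lt_add_of_pos_right (infDist (a • x + b • z) Y) hδ)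
    have h1 : k (a • x + b • z)
        ≤ ‖a • x + b • z‖^2/(2*s) - psiAux s (dist (a • x + b • z) y) + δ := by
      have e1 : psiAux s (dist (a • x + b • z) y)
          ≤ psiAux s (infDist (a • x + b • z) Y + δ) :=
        psiAux_mono hs dist_nonneg hyd.le
      have e2 : psiAux s (infDist (a • x + b • z) Y + δ)
          ≤ psiAux s (infDist (a • x + b • z) Y) + δ :=
        psiAux_lip hs infDist_nonneg hδ.le
      simp only [hk]
      linarith
    have h2 := (hsingle y).2 (mem_univ x) (mem_univ z) ha hb hab
    simp only [smul_eq_mul] at h2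
    have h3 : ‖x‖^2/(2*s) - psiAux s (dist x y) ≤ k x := by
      have := psiAux_mono hs infDist_nonneg (infDist_le_dist_of_mem hy : infDist x Y ≤ dist x y)
      simp only [hk]; linarith
    have h4 : ‖z‖^2/(2*s) - psiAux s (dist z y) ≤ k z := by
      have := psiAux_mono hs infDist_nonneg (infDist_le_dist_of_mem hy : infDist z Y ≤ dist z y)
      simp only [hk]; linarith
    have h5 : a * (‖x‖^2/(2*s) - psiAux s (dist x y)) ≤ a * k x :=
      mul_le_mul_of_nonneg_left h3 ha
    have h6 : b * (‖z‖^2/(2*s) - psiAux s (dist z y)) ≤ b * k z :=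
      mul_le_mul_of_nonneg_left h4 hb
    have h7 : ‖a • x + b • z‖^2/(2*s) - psiAux s (dist (a • x + b • z) y)
        ≤ a * k x + b * k z := le_trans h2 (add_le_add h5 h6)
    exact le_trans h1 (add_le_add_left h7 δ)
  refine ⟨fun x => max (‖x‖^2/(2*s) - s) (k x), k, ?_, hkconv, ?_⟩
  · have hq' : ConvexOn ℝ (univ : Set E) (fun x : E => ‖x‖^2/(2*s) - s) := by
      simpa [sub_eq_add_neg, Pi.add_def] using (convexOn_normsq_div hs (E := E)).add_const (-s)
    have h := hq'.sup hkconv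
    have e : (fun x : E => max (‖x‖^2/(2*s) - s) (k x))
        = ((fun x : E => ‖x‖^2/(2*s) - s) ⊔ k) := by
      funext w
      rw [Pi.sup_apply]
    rw [e]; exact h
  · intro x
    have hqk : ‖x‖^2/(2*s) - k x = psiAux s (infDist x Y) := by simp only [hk]; ring
    have hmaxsub : max (‖x‖^2/(2*s) - s) (k x) - k x = max (‖x‖^2/(2*s) - s - k x) 0 := by
      rcases le_total (‖x‖^2/(2*s) - s) (k x) with h | h
      · rw [max_eq_right h, max_eq_right (by linarith)]
        ring
      · rw [max_eq_left h, max_eq_left (by linarith)]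
    rw [hmaxsub]
    have e2 : ‖x‖^2/(2*s) - s - k x = psiAux s (infDist x Y) - s := by linarith
    rw [e2]
    rcases le_total s (infDist x Y) with h | h
    · rw [psiAux_eq hs h]
    · have h1 : psiAux s (infDist x Y) ≤ s := psiAux_le hs infDist_nonneg h
      rw [max_eq_right (by linarith), max_eq_right (by linarith)]

lemma closed_of_unique (A : Set E) (hA : A.Nonempty) {R : ℝ} (hRpos : 0 < R)
    (hR : ∀ a ∈ A, ∀ z : E, dist z a < R → ∃! p, p ∈ A ∧ dist z p = infDist z A) :
    IsClosed A := by
  apply isClosed_of_closure_subset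
  intro z hz
  have h0 : infDist z A = 0 := infDist_zero_of_mem_closure hz
  obtain ⟨a, ha, hda⟩ := (infDist_lt_iff hA).1 (show infDist z A < R by rw [h0]; exact hRpos)
  obtain ⟨p, hp, -⟩ := hR a ha z hda
  rw [h0] at hp
  have hzp : z = p := dist_eq_zero.1 hp.2
  rw [hzp]
  exact hp.1

lemma proj_continuousOn [ProperSpace E] (A : Set E) (hA : A.Nonempty) (hclosed : IsClosed A)
    {R : ℝ} (hRpos : 0 < R)
    (hR : ∀ a ∈ A, ∀ z : E, dist z a < R → ∃! p, p ∈ A ∧ dist z p = infDist z A)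
    (π : E → E) (hπA : ∀ z, π z ∈ A) (hπd : ∀ z, dist z (π z) = infDist z A) :
    ContinuousOn π {z | infDist z A < R} := by
  have huniq : ∀ z p, infDist z A < R → p ∈ A → dist z p = infDist z A → p = π z := by
    intro z p hzR hp hpd
    obtain ⟨q, _, hq'⟩ := hR (π z) (hπA z) z (by rw [hπd z]; exact hzR)
    exact (hq' p ⟨hp, hpd⟩).trans (hq' (π z) ⟨hπA z, hπd z⟩).symm
  intro z hz
  rw [Metric.continuousWithinAt_iff]
  by_contra hcon
  push_neg at hcon
  obtain ⟨ε, hε, hcon⟩ := hcon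
  have hseq : ∀ n : ℕ, ∃ y, (infDist y A < R) ∧ dist y z < 1/(n+1) ∧ ε ≤ dist (π y) (π z) := by
    intro n
    obtain ⟨y, hy1, hy2, hy3⟩ := hcon (1/(n+1)) (by positivity)
    exact ⟨y, hy1, hy2, hy3⟩
  choose u hu1 hu2 hu3 using hseq
  have hulim : Filter.Tendsto u Filter.atTop (nhds z) := by
    rw [tendsto_iff_dist_tendsto_zero]
    apply squeeze_zero (fun n => dist_nonneg) (fun n => (hu2 n).le)
    exact tendsto_one_div_add_atTop_nhds_zero_nat
  have hball : ∀ n, π (u n) ∈ closedBall z (R + 1) := by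
    intro n
    rw [mem_closedBall]
    have t1 : dist (π (u n)) z ≤ dist (π (u n)) (u n) + dist (u n) z := dist_triangle _ _ _
    have t2 : dist (π (u n)) (u n) = infDist (u n) A := by rw [dist_comm]; exact hπd (u n)
    have t3 : dist (u n) z ≤ 1 := by
      have := hu2 n
      have h4 : (1:ℝ)/(n+1) ≤ 1 := by
        rw [div_le_one (by positivity)]
        simp
      linarith
    have t4 := hu1 n
    linarith
  obtain ⟨p, _, φ, hφ, hφlim⟩ := (isCompact_closedBall z (R+1)).tendsto_subseq hball
  have hpA : p ∈ A := hclosed.mem_of_tendsto hφlim (Filter.Eventually.of_forall fun n => hπA _)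
  have hcomp : Filter.Tendsto (u ∘ φ) Filter.atTop (nhds z) := hulim.comp hφ.tendsto_atTop
  have hd1 : Filter.Tendsto (fun n => dist (u (φ n)) (π (u (φ n)))) Filter.atTop
      (nhds (dist z p)) := hcomp.dist hφlim
  have hd2 : Filter.Tendsto (fun n => infDist (u (φ n)) A) Filter.atTop
      (nhds (infDist z A)) := ((continuous_infDist_pt A).tendsto z).comp hcomp
  have he : dist z p = infDist z A := by
    have heq : (fun n => dist (u (φ n)) (π (u (φ n)))) = fun n => infDist (u (φ n)) A :=
      funext fun n => hπd _
    rw [heq] at hd1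
    exact tendsto_nhds_unique hd1 hd2
  have hpπ : p = π z := huniq z p hz hpA he
  have hεle : ε ≤ dist p (π z) := by
    have hlim2 : Filter.Tendsto (fun n => dist (π (u (φ n))) (π z)) Filter.atTop
        (nhds (dist p (π z))) := hφlim.dist tendsto_const_nhds
    exact ge_of_tendsto hlim2 (Filter.Eventually.of_forall fun n => hu3 (φ n))
  rw [hpπ, dist_self] at hεle
  linarith

set_option maxHeartbeats 1000000 in
lemma euler_reach [ProperSpace E] (A : Set E) (hA : A.Nonempty) (hclosed : IsClosed A)
    {R r : ℝ} (hRpos : 0 < R) (hr : 0 < r) (hrR : 2*r ≤ R)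
    (hR : ∀ a ∈ A, ∀ z : E, dist z a < R → ∃! p, p ∈ A ∧ dist z p = infDist z A)
    {x : E} (hx : x ∉ A) (hxr : infDist x A < r) :
    ∀ η : ℝ, 0 < η → ∃ z : E, r ≤ infDist z A ∧ dist x z ≤ r - infDist x A + η := by
  have hδ : 0 < infDist x A := (hclosed.notMem_iff_infDist_pos hA).1 hx
  set δ := infDist x A with hδdef
  clear_value δ
  intro η hη
  choose π hπ using fun z : E => hclosed.exists_infDist_eq_dist hA z
  have hπA : ∀ z, π z ∈ A := fun z => (hπ z).1
  have hπd : ∀ z, dist z (π z) = infDist z A := fun z => ((hπ z).2).symm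
  have hcont := proj_continuousOn A hA hclosed hRpos hR π hπA hπd
  set K := closedBall x (2*r) ∩ {z | infDist z A ≤ r + r/2} with hK
  have hKsub : K ⊆ {z | infDist z A < R} := by
    intro z hzK
    have h1 : infDist z A ≤ r + r/2 := hzK.2
    have h2 : r + r/2 < R := by linarith
    exact lt_of_le_of_lt h1 h2
  have hKcomp : IsCompact K := (isCompact_closedBall x (2*r)).inter_right
    (isClosed_le (continuous_infDist_pt A) continuous_const)
  have hUC := hKcomp.uniformContinuousOn_of_continuous (hcont.mono hKsub)
  set η' := min (δ/4) (δ*η/(8*r)) with hη'def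
  have hη'pos : 0 < η' := lt_min (by linarith only [hδ])
    (div_pos (mul_pos hδ hη) (by linarith only [hr]))
  have hη'δ : η' ≤ δ/4 := min_le_left _ _
  have hη'2 : η' ≤ δ*η/(8*r) := min_le_right _ _
  clear_value η'
  obtain ⟨ε₀, hε₀pos, hUCP⟩ := Metric.uniformContinuousOn_iff.1 hUC η' hη'pos
  set ε := min (min (ε₀/2) (δ/2)) (min (r/2) (η/2)) with hεdef
  have hεpos : 0 < ε := lt_min (lt_min (by linarith) (by linarith))
    (lt_min (by linarith) (by linarith))
  have hεε₀ : ε < ε₀ := lt_of_le_of_lt (le_trans (min_le_left _ _) (min_le_left _ _))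
    (by linarith)
  have hεδ : ε ≤ δ/2 := le_trans (min_le_left _ _) (min_le_right _ _)
  have hεr : ε ≤ r/2 := le_trans (min_le_right _ _) (min_le_left _ _)
  have hεη : ε ≤ η/2 := le_trans (min_le_right _ _) (min_le_right _ _)
  clear_value ε
  set lam := 1 - 2*η'/δ with hlamdef
  have hlamδ : (1 - lam)*δ = 2*η' := by
    rw [hlamdef]
    have e : (1 - (1 - 2*η'/δ)) = 2*η'/δ := by ring
    rw [e, div_mul_cancel₀ _ hδ.ne']
  have hlam_half : 1/2 ≤ lam := by
    have h1 : (1 - lam)*δ ≤ (1/2)*δ := by rw [hlamδ]; linarith only [hη'δ]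
    have h2 : 1 - lam ≤ 1/2 := le_of_mul_le_mul_right (by linarith only [h1]) hδ
    linarith only [h2]
  have hlam_le1 : lam ≤ 1 := by
    have h1 : (0:ℝ)*δ ≤ (1 - lam)*δ := by rw [hlamδ]; linarith only [hη'pos]
    have h2 : (0:ℝ) ≤ 1 - lam := le_of_mul_le_mul_right (by linarith only [h1]) hδ
    linarith only [h2]
  have hlampos : 0 < lam := lt_of_lt_of_le (by norm_num) hlam_half
  clear_value lam
  have main : ∀ k : ℕ, ∃ z : E, dist x z ≤ k*ε ∧ min r (δ + lam*(k*ε)) ≤ infDist z A ∧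
      infDist z A ≤ r + ε := by
    intro k
    induction k with
    | zero =>
      refine ⟨x, by simp, ?_, ?_⟩
      · have h00 : min r (δ + lam*(((0:ℕ):ℝ)*ε)) ≤ δ := by
          have e00 : ((0:ℕ):ℝ)*ε = 0 := by norm_num
          rw [e00, mul_zero, add_zero]
          exact min_le_right _ _
        rw [← hδdef]
        exact h00
      · rw [← hδdef]
        linarith only [hxr, hεpos]
    | succ k ih =>
      obtain ⟨z, h1, h2, h3⟩ := ih
      by_cases hzr : r ≤ infDist z A
      · refine ⟨z, ?_, le_trans (min_le_left _ _) hzr, h3⟩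
        have hkk : (k:ℝ)*ε ≤ ((k:ℕ)+1:ℕ)*ε := by push_cast; linarith only [hεpos.le]
        exact le_trans h1 hkk
      · push_neg at hzr
        set m := infDist z A with hm
        clear_value m
        have hmlow : δ + lam*(k*ε) ≤ m := by
          rcases le_total r (δ + lam*(k*ε)) with hc | hc
          · rw [min_eq_left hc] at h2; linarith only [h2, hzr]
          · rw [min_eq_right hc] at h2; exact h2
        have hkε0 : (0:ℝ) ≤ (k:ℝ)*ε := by positivity
        have hmδ : δ ≤ m := by linarith only [hmlow, mul_nonneg hlampos.le hkε0]
        have hmpos : 0 < m := lt_of_lt_of_le hδ hmδ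
        have hkε : (k:ℝ)*ε ≤ 2*(r - δ) := by
          have h5 : lam*((k:ℝ)*ε) ≤ r - δ := by linarith only [hmlow, hzr]
          have h6 : (1/2)*((k:ℝ)*ε) ≤ lam*((k:ℝ)*ε) := mul_le_mul_of_nonneg_right hlam_half hkε0
          linarith only [h5, h6]
        set p := π z with hp
        have hzp : dist z p = m := by rw [hm]; exact hπd z
        set u := (ε/m) • (z - p) with hu
        set z' := z + u with hz'
        have hzpnorm : ‖z - p‖ = m := by rw [← dist_eq_norm]; exact hzp
        have hz'dist : dist z' z = ε := by
          have e0 : z' - z = (ε/m) • (z - p) := by rw [hz', hu]; abel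
          rw [dist_eq_norm, e0, norm_smul, Real.norm_eq_abs,
            abs_of_nonneg (div_nonneg hεpos.le hmpos.le),
            hzpnorm, div_mul_cancel₀ _ hmpos.ne']
        have hzK : z ∈ K := by
          constructor
          · rw [mem_closedBall, dist_comm]; linarith only [h1, hkε, hδ]
          · show infDist z A ≤ r + r/2
            rw [← hm]
            linarith only [hzr, hr]
        have hz'K : z' ∈ K := by
          constructor
          · rw [mem_closedBall]
            have t1 : dist z' x ≤ dist z' z + dist z x := dist_triangle _ _ _
            rw [hz'dist, dist_comm z x] at t1
            linarith only [t1, h1, hkε, hεδ, hδ]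
          · show infDist z' A ≤ r + r/2
            have t2 : infDist z' A ≤ infDist z A + dist z' z := infDist_le_infDist_add_dist
            rw [hz'dist, ← hm] at t2
            linarith only [t2, hzr, hεr]
        have hπdist : dist (π z) (π z') < η' := by
          apply hUCP z hzK z' hz'K
          have : dist z z' = ε := by rw [dist_comm]; exact hz'dist
          rw [this]
          exact hεε₀
        set p' := π z' with hp'
        have hp'A : p' ∈ A := hπA z'
        have hlow2 : m ≤ dist z p' := by rw [hm]; exact infDist_le_dist_of_mem hp'A
        have hcancel1 : (ε/m)*m = ε := div_mul_cancel₀ ε hmpos.ne'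
        have hinner : (m + ε)^2 - 2*ε*η' ≤ (dist z' p')^2 := by
          have e1 : z' - p' = (z - p') + (ε/m) • (z - p) := by rw [hz', hu]; abel
          have e2 : ‖z' - p'‖^2 = ‖z - p'‖^2 + 2*((ε/m)*⟪z - p', z - p⟫)
              + (ε/m)^2*‖z - p‖^2 := by
            rw [e1, norm_add_sq_real, real_inner_smul_right, norm_smul, Real.norm_eq_abs,
              abs_of_nonneg (div_nonneg hεpos.le hmpos.le)]
            ring
          have e3 : ⟪z - p', z - p⟫ = ‖z - p‖^2 + ⟪p - p', z - p⟫ := by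
            have e3' : z - p' = (z - p) + (p - p') := by abel
            rw [e3', inner_add_left, real_inner_self_eq_norm_sq]
          have e4 : -(η' * m) ≤ ⟪p - p', z - p⟫ := by
            have hc := abs_real_inner_le_norm (p - p') (z - p)
            have hpp' : ‖p - p'‖ ≤ η' := by rw [← dist_eq_norm]; exact hπdist.le
            have h7 : |⟪p - p', z - p⟫| ≤ η' * m := by
              rw [hzpnorm] at hc
              calc |⟪p - p', z - p⟫| ≤ ‖p - p'‖ * m := hc
                _ ≤ η' * m := mul_le_mul_of_nonneg_right hpp' hmpos.le
            linarith only [h7, neg_abs_le ⟪p - p', z - p⟫]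
          have e5 : m^2 ≤ ‖z - p'‖^2 := by
            have h8 : m ≤ ‖z - p'‖ := by rw [← dist_eq_norm]; exact hlow2
            have h9 := mul_self_le_mul_self hmpos.le h8
            calc m^2 = m*m := by ring
              _ ≤ ‖z - p'‖*‖z - p'‖ := h9
              _ = ‖z - p'‖^2 := by ring
          have e6 : -(ε*η') ≤ (ε/m)*⟪p - p', z - p⟫ := by
            have hεm : (0:ℝ) ≤ ε/m := div_nonneg hεpos.le hmpos.le
            have h8 := mul_le_mul_of_nonneg_left e4 hεm
            have h9 : (ε/m)*(η'*m) = ε*η' := by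
              field_simp
            calc -(ε*η') = (ε/m)*(-(η'*m)) := by rw [mul_neg, h9]
              _ ≤ (ε/m)*⟪p - p', z - p⟫ := h8
          have hcancel2 : (ε/m)*m^2 = ε*m := by field_simp
          have hcancel3 : (ε/m)^2*m^2 = ε^2 := by field_simp
          rw [dist_eq_norm]
          have e7 : ‖z' - p'‖^2 = ‖z - p'‖^2 + 2*((ε/m)*‖z - p‖^2) + 2*((ε/m)*⟪p - p', z - p⟫)
              + (ε/m)^2*‖z - p‖^2 := by rw [e2, e3]; ring
          rw [e7, hzpnorm, hcancel2, hcancel3]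
          have tId2 : (m+ε)^2 = m^2 + 2*(ε*m) + ε^2 := by ring
          linarith only [e5, e6, tId2]
        have hstep : m + lam*ε ≤ infDist z' A := by
          have hd' : infDist z' A = dist z' p' := (hπd z').symm
          have hq1 : (m + lam*ε)^2 ≤ (m+ε)^2 - 2*ε*η' := by
            have t3 : 0 ≤ ε*ε*((1-lam)*(1+lam)) :=
              mul_nonneg (mul_nonneg hεpos.le hεpos.le)
                (mul_nonneg (by linarith) (by linarith))
            have t4 : 0 ≤ ε*((1-lam)*(2*m - δ)) :=
              mul_nonneg hεpos.le (mul_nonneg (by linarith) (by linarith))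
            have t5 : ε*((1-lam)*δ) = ε*(2*η') := by rw [hlamδ]
            have tId : (m+ε)^2 - 2*ε*η' - (m + lam*ε)^2
                = ε*((1-lam)*(2*m - δ)) + (ε*((1-lam)*δ) - ε*(2*η'))
                  + ε*ε*((1-lam)*(1+lam)) := by ring
            linarith only [t3, t4, t5, tId]
          have h0 : 0 < m + lam*ε := by
            linarith only [hmpos, mul_nonneg hlampos.le hεpos.le]
          have hd0 : 0 ≤ dist z' p' := dist_nonneg
          have hsq' : (m + lam*ε)^2 ≤ (dist z' p')^2 := le_trans hq1 hinner
          rw [hd', ← Real.sqrt_sq h0.le, ← Real.sqrt_sq hd0]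
          exact Real.sqrt_le_sqrt hsq'
        refine ⟨z', ?_, ?_, ?_⟩
        · have t1 : dist x z' ≤ dist x z + dist z z' := dist_triangle _ _ _
          rw [dist_comm z z', hz'dist] at t1
          have hxx : ((k+1:ℕ):ℝ)*ε = (k:ℝ)*ε + ε := by push_cast; ring
          linarith only [t1, hxx, h1]
        · refine le_trans (min_le_right _ _) ?_
          have hexp : lam*((((k+1):ℕ):ℝ)*ε) = lam*((k:ℝ)*ε) + lam*ε := by push_cast; ring
          rw [hexp]
          linarith only [hmlow, hstep]
        · have t2 : infDist z' A ≤ infDist z A + dist z' z := infDist_le_infDist_add_dist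
          rw [hz'dist, ← hm] at t2
          linarith only [t2, hzr]
  obtain ⟨z, hz1, hz2, hz3⟩ := main (Nat.ceil ((r - δ)/(lam*ε)))
  set N := Nat.ceil ((r - δ)/(lam*ε)) with hN
  have hc0 : 0 ≤ (r - δ)/(lam*ε) := div_nonneg (by linarith only [hxr])
    (mul_nonneg hlampos.le hεpos.le)
  have hge : r ≤ δ + lam*((N:ℝ)*ε) := by
    have h9 : (r - δ)/(lam*ε) ≤ (N:ℝ) := Nat.le_ceil _
    have h10 : r - δ ≤ (N:ℝ)*(lam*ε) := (div_le_iff₀ (mul_pos hlampos hεpos)).1 h9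
    have h11 : (N:ℝ)*(lam*ε) = lam*((N:ℝ)*ε) := by ring
    linarith only [h10, h11]
  have hzY : r ≤ infDist z A := by
    rw [min_eq_left hge] at hz2
    exact hz2
  have hbound : dist x z ≤ r - δ + η := by
    have h11 : (N:ℝ) < (r - δ)/(lam*ε) + 1 := Nat.ceil_lt_add_one hc0
    have h13 : (N:ℝ)*ε ≤ (r-δ)/lam + ε := by
      have h12 := mul_le_mul_of_nonneg_right h11.le hεpos.le
      have he2a : (r-δ)/(lam*ε)*ε = (r-δ)/lam := by
        rw [div_mul_eq_mul_div, mul_comm lam ε, ← div_div, mul_div_assoc,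
          div_self hεpos.ne', mul_one]
      have he2 : ((r-δ)/(lam*ε) + 1)*ε = (r-δ)/lam + ε := by
        rw [add_mul, one_mul, he2a]
      linarith only [h12, he2]
    have h14 : (r-δ)/lam ≤ (r-δ) + η/2 := by
      rw [div_le_iff₀ hlampos]
      have hx2 : (1 - lam) ≤ η/(4*r) := by
        have h8r : (0:ℝ) < 8*r := by linarith only [hr]
        have h15a : η'*(8*r) ≤ (δ*η/(8*r))*(8*r) :=
          mul_le_mul_of_nonneg_right hη'2 h8r.le
        have h15b : (δ*η/(8*r))*(8*r) = δ*η := div_mul_cancel₀ _ h8r.ne'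
        have h15 : (1 - lam)*δ ≤ (η/(4*r))*δ := by
          rw [hlamδ]
          rw [div_mul_eq_mul_div, le_div_iff₀ (by linarith only [hr] : (0:ℝ) < 4*r)]
          have tId : 2*η'*(4*r) = η'*(8*r) := by ring
          linarith only [h15a, h15b, tId]
        exact le_of_mul_le_mul_right h15 hδ
      have t1 : (r-δ)*(1-lam) ≤ r*(1-lam) := mul_le_mul_of_nonneg_right (by linarith)
        (by linarith)
      have t2 : r*(1-lam) ≤ r*(η/(4*r)) := mul_le_mul_of_nonneg_left hx2 hr.le
      have t3 : r*(η/(4*r)) = η/4 := by field_simp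
      have t4 : η/4 ≤ (η/2)*lam := by
        have t4a : 0 ≤ (η/2)*(lam - 1/2) :=
          mul_nonneg (by linarith) (by linarith)
        have t4b : (η/2)*(lam - 1/2) = (η/2)*lam - η/4 := by ring
        linarith only [t4a, t4b]
      have tId3 : (r-δ+η/2)*lam = (r-δ) - (r-δ)*(1-lam) + (η/2)*lam := by ring
      linarith only [t1, t2, t3, t4, tId3]
    linarith only [h13, h14, hεη, hz1]
  exact ⟨z, hzY, hbound⟩

lemma seg_to_frontier_of_mem (A : Set E) (hclosed : IsClosed A) {x z : E} (hx : x ∈ A)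
    (hz : z ∈ closure Aᶜ) : ∃ w ∈ frontier A, dist x w ≤ dist x z := by
  set γ : ℝ → E := fun t => x + t • (z - x) with hγ
  have hγcont : Continuous γ := continuous_const.add (continuous_id.smul continuous_const)
  set S := Icc (0:ℝ) 1 ∩ γ ⁻¹' A with hS
  have hS0 : (0:ℝ) ∈ S := by
    refine ⟨⟨le_refl 0, zero_le_one⟩, ?_⟩
    show γ 0 ∈ A
    simp only [hγ, zero_smul, add_zero]
    exact hx
  have hSclosed : IsClosed S := isClosed_Icc.inter (hclosed.preimage hγcont)
  have hSbdd : BddAbove S := ⟨1, fun t ht => ht.1.2⟩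
  set t₀ := sSup S with ht₀
  have ht₀S : t₀ ∈ S := hSclosed.csSup_mem ⟨0, hS0⟩ hSbdd
  have hwA : γ t₀ ∈ A := ht₀S.2
  have ht₀mem : t₀ ∈ Icc (0:ℝ) 1 := ht₀S.1
  have hwcl : γ t₀ ∈ closure Aᶜ := by
    rcases eq_or_lt_of_le ht₀mem.2 with heq | hlt
    · have hz' : γ t₀ = z := by
        rw [hγ]
        simp only [heq, one_smul]
        abel
      rw [hz']
      exact hz
    · have hlim : Filter.Tendsto (fun n : ℕ => t₀ + (1 - t₀)/(n+1)) Filter.atTop (nhds t₀) := by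
        have h2 := tendsto_one_div_add_atTop_nhds_zero_nat (𝕜 := ℝ)
        have h3 := h2.const_mul (1 - t₀)
        have h4 : Filter.Tendsto (fun n : ℕ => (1 - t₀)*(1/(n+1))) Filter.atTop (nhds 0) := by
          simpa using h3
        have h5 := tendsto_const_nhds (x := t₀) (f := Filter.atTop (α := ℕ))
        have h6 := h5.add h4
        simp only [add_zero] at h6
        convert h6 using 2 with n
        rw [mul_one_div]
      have hseq : Filter.Tendsto (fun n : ℕ => γ (t₀ + (1 - t₀)/(n+1))) Filter.atTop
          (nhds (γ t₀)) := (hγcont.tendsto t₀).comp hlim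
      apply mem_closure_of_tendsto hseq
      apply Filter.Eventually.of_forall
      intro n
      show γ (t₀ + (1 - t₀)/(n+1)) ∈ Aᶜ
      intro hmem
      have hpos : 0 < (1 - t₀)/(n+1) := div_pos (by linarith) (by positivity)
      have hle : (1 - t₀)/(n+1) ≤ 1 - t₀ := div_le_self (by linarith) (by
        have : (0:ℝ) ≤ (n:ℝ) := Nat.cast_nonneg n
        linarith)
      have htn : t₀ + (1 - t₀)/(n+1) ∈ S :=
        ⟨⟨by linarith [ht₀mem.1], by linarith⟩, hmem⟩
      have := le_csSup hSbdd htn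
      linarith
  have hwfr : γ t₀ ∈ frontier A := by
    rw [frontier_eq_closure_inter_closure, hclosed.closure_eq]
    exact ⟨hwA, hwcl⟩
  refine ⟨γ t₀, hwfr, ?_⟩
  have hd : dist x (γ t₀) = t₀ * dist x z := by
    rw [dist_eq_norm, dist_eq_norm, hγ]
    have e : x - (x + t₀ • (z - x)) = t₀ • (x - z) := by
      rw [smul_sub, smul_sub]
      abel
    rw [e, norm_smul, Real.norm_eq_abs, abs_of_nonneg ht₀mem.1]
  rw [hd]
  calc t₀ * dist x z ≤ 1 * dist x z := mul_le_mul_of_nonneg_right ht₀mem.2 dist_nonneg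
    _ = dist x z := one_mul _

lemma seg_to_frontier_of_not_mem (A : Set E) (hclosed : IsClosed A) {x a : E} (hx : x ∉ A)
    (ha : a ∈ A) : ∃ w ∈ frontier A, dist x w ≤ dist x a := by
  set γ : ℝ → E := fun t => x + t • (a - x) with hγ
  have hγcont : Continuous γ := continuous_const.add (continuous_id.smul continuous_const)
  set S := Icc (0:ℝ) 1 ∩ γ ⁻¹' A with hS
  have hS1 : (1:ℝ) ∈ S := by
    refine ⟨⟨zero_le_one, le_refl 1⟩, ?_⟩
    show γ 1 ∈ A
    simp only [hγ, one_smul]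
    have : x + (a - x) = a := by abel
    rw [this]
    exact ha
  have hSclosed : IsClosed S := isClosed_Icc.inter (hclosed.preimage hγcont)
  have hSbdd : BddBelow S := ⟨0, fun t ht => ht.1.1⟩
  set t₁ := sInf S with ht₁
  have ht₁S : t₁ ∈ S := hSclosed.csInf_mem ⟨1, hS1⟩ hSbdd
  have hwA : γ t₁ ∈ A := ht₁S.2
  have ht₁mem : t₁ ∈ Icc (0:ℝ) 1 := ht₁S.1
  have ht₁pos : 0 < t₁ := by
    rcases eq_or_lt_of_le ht₁mem.1 with heq | hlt
    · exfalso
      apply hx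
      have : γ t₁ = x := by
        rw [hγ, ← heq]
        simp
      rw [← this]
      exact hwA
    · exact hlt
  have hwcl : γ t₁ ∈ closure Aᶜ := by
    have hlim : Filter.Tendsto (fun n : ℕ => t₁ - t₁/(n+1)) Filter.atTop (nhds t₁) := by
      have h2 := tendsto_one_div_add_atTop_nhds_zero_nat (𝕜 := ℝ)
      have h3 := h2.const_mul t₁
      have h4 : Filter.Tendsto (fun n : ℕ => t₁*(1/(n+1))) Filter.atTop (nhds 0) := by
        simpa using h3
      have h5 := tendsto_const_nhds (x := t₁) (f := Filter.atTop (α := ℕ))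
      have h6 := h5.sub h4
      simp only [sub_zero] at h6
      convert h6 using 2 with n
      rw [mul_one_div]
    have hseq : Filter.Tendsto (fun n : ℕ => γ (t₁ - t₁/(n+1))) Filter.atTop
        (nhds (γ t₁)) := (hγcont.tendsto t₁).comp hlim
    apply mem_closure_of_tendsto hseq
    apply Filter.Eventually.of_forall
    intro n
    show γ (t₁ - t₁/(n+1)) ∈ Aᶜ
    intro hmem
    have hpos : 0 < t₁/(n+1) := div_pos ht₁pos (by positivity)
    have hle : t₁/(n+1) ≤ t₁ := div_le_self ht₁pos.le (by
      have : (0:ℝ) ≤ (n:ℝ) := Nat.cast_nonneg n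
      linarith)
    have htn : t₁ - t₁/(n+1) ∈ S :=
      ⟨⟨by linarith, by linarith [ht₁mem.2]⟩, hmem⟩
    have := csInf_le hSbdd htn
    linarith
  have hwfr : γ t₁ ∈ frontier A := by
    rw [frontier_eq_closure_inter_closure, hclosed.closure_eq]
    exact ⟨hwA, hwcl⟩
  refine ⟨γ t₁, hwfr, ?_⟩
  have hd : dist x (γ t₁) = t₁ * dist x a := by
    rw [dist_eq_norm, dist_eq_norm, hγ]
    have e : x - (x + t₁ • (a - x)) = t₁ • (x - a) := by
      rw [smul_sub, smul_sub]
      abel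
    rw [e, norm_smul, Real.norm_eq_abs, abs_of_nonneg ht₁mem.1]
  rw [hd]
  calc t₁ * dist x a ≤ 1 * dist x a := mul_le_mul_of_nonneg_right ht₁mem.2 dist_nonneg
    _ = dist x a := one_mul _


set_option maxHeartbeats 1000000 in
theorem stmt_16 (d : ℕ) (A : Set (EuclideanSpace ℝ (Fin d))) (hA : A.Nonempty)
    (hreach : 0 < reach A) :
    IsDCOn Set.univ (fun x => Metric.infDist x (closure Aᶜ)) ∧
    IsDCOn Set.univ (fun x => Metric.infDist x (frontier A)) := by
  classical
  by_cases hAc : (Aᶜ).Nonempty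
  swap
  · have hAe : Aᶜ = ∅ := not_nonempty_iff_eq_empty.1 hAc
    have hfr : frontier A = ∅ := by
      have hAu : A = univ := by rw [← compl_compl A, hAe, compl_empty]
      rw [hAu, frontier_univ]
    constructor
    · exact ⟨fun _ => 0, fun _ => 0, convexOn_const 0 convex_univ, convexOn_const 0 convex_univ,
        fun x _ => by simp [hAe, infDist_empty]⟩
    · exact ⟨fun _ => 0, fun _ => 0, convexOn_const 0 convex_univ, convexOn_const 0 convex_univ,
        fun x _ => by simp [hfr, infDist_empty]⟩
  · obtain ⟨R, hRpos, hR⟩ : ∃ R : ℝ, 0 < R ∧ ∀ a ∈ A, ∀ z : EuclideanSpace ℝ (Fin d),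
        dist z a < R → ∃! p, p ∈ A ∧ dist z p = infDist z A := by
      set c := min (reach A) 1 with hc
      have hcpos : 0 < c := lt_min hreach zero_lt_one
      have hcne : c ≠ ⊤ := ne_top_of_le_ne_top ENNReal.one_ne_top (min_le_right _ _)
      have hctr : 0 < c.toReal := ENNReal.toReal_pos hcpos.ne' hcne
      refine ⟨c.toReal/2, by linarith, ?_⟩
      intro a ha z hz
      have hreachle : reach A ≤ reachAt A a := by
        rw [reach]
        exact iInf₂_le a ha
      have h1 : ENNReal.ofReal (c.toReal/2) < reachAt A a := by
        have h2 : ENNReal.ofReal (c.toReal/2) < ENNReal.ofReal c.toReal :=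
          (ENNReal.ofReal_lt_ofReal_iff hctr).2 (by linarith)
        rw [ENNReal.ofReal_toReal hcne] at h2
        exact lt_of_lt_of_le h2 (le_trans (min_le_left _ _) hreachle)
      rw [reachAt] at h1
      obtain ⟨ρ, hρmem, hρgt⟩ := lt_sSup_iff.1 h1
      apply hρmem z
      calc edist z a = ENNReal.ofReal (dist z a) := edist_dist z a
        _ < ENNReal.ofReal (c.toReal/2) := (ENNReal.ofReal_lt_ofReal_iff (by linarith)).2 hz
        _ < ρ := hρgt
    have hclosed : IsClosed A := closed_of_unique A hA hRpos hR
    set r := R/2 with hr_def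
    have hrpos : 0 < r := by rw [hr_def]; linarith
    have hrR : 2*r ≤ R := by rw [hr_def]; linarith
    set Y := {y : EuclideanSpace ℝ (Fin d) | r ≤ infDist y A} with hYdef
    have hupper : ∀ x : EuclideanSpace ℝ (Fin d), x ∉ A → infDist x A < r →
        infDist x Y ≤ r - infDist x A := by
      intro x hx hxr
      apply le_of_forall_pos_le_add
      intro η hη
      obtain ⟨z, hz1, hz2⟩ := euler_reach A hA hclosed hRpos hrpos hrR hR hx hxr η hη
      exact le_trans (infDist_le_dist_of_mem (show z ∈ Y from hz1)) hz2
    have hYne : Y.Nonempty := by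
      obtain ⟨w, hw⟩ := hAc
      by_cases hwr : r ≤ infDist w A
      · exact ⟨w, hwr⟩
      · push_neg at hwr
        obtain ⟨z, hz1, -⟩ := euler_reach A hA hclosed hRpos hrpos hrR hR hw hwr 1 one_pos
        exact ⟨z, hz1⟩
    have hlower : ∀ x : EuclideanSpace ℝ (Fin d), r - infDist x A ≤ infDist x Y := by
      intro x
      apply le_infDist_of hYne
      intro y hy
      have h1 : infDist y A ≤ infDist x A + dist y x := infDist_le_infDist_add_dist
      have h2 : r ≤ infDist y A := hy
      rw [dist_comm x y]
      linarith
    have hL1 : ∀ x, x ∉ A → infDist x A < r → infDist x Y = r - infDist x A :=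
      fun x hx hxr => le_antisymm (hupper x hx hxr) (hlower x)
    have hfcl_eq : ∀ x : EuclideanSpace ℝ (Fin d),
        infDist x (closure Aᶜ) = infDist x Aᶜ := fun x => infDist_closure
    have hL2 : ∀ x ∈ A, infDist x Y = r + infDist x (closure Aᶜ) := by
      intro x hx
      have hdA0 : infDist x A = 0 := infDist_zero_of_mem hx
      apply le_antisymm
      · apply le_of_forall_pos_le_add
        intro η hη
        have h1 : infDist x Aᶜ < infDist x (closure Aᶜ) + η/2 := by
          rw [hfcl_eq x]
          linarith
        obtain ⟨w, hw, hwd⟩ := (infDist_lt_iff hAc).1 h1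
        have hwY : infDist w Y ≤ r := by
          by_cases hwr : r ≤ infDist w A
          · rw [infDist_zero_of_mem (show w ∈ Y from hwr)]
            linarith
          · push_neg at hwr
            have h5 := hupper w hw hwr
            have h0 : 0 ≤ infDist w A := infDist_nonneg
            linarith
        have h3 : infDist x Y ≤ infDist w Y + dist x w := infDist_le_infDist_add_dist
        linarith
      · apply le_infDist_of hYne
        intro y hy
        have hD : r ≤ dist x y := by
          have h1 : infDist y A ≤ infDist x A + dist y x := infDist_le_infDist_add_dist
          have h2 : r ≤ infDist y A := hy
          rw [hdA0] at h1
          rw [dist_comm x y]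
          linarith
        have hDpos : 0 < dist x y := lt_of_lt_of_le hrpos hD
        have key : ∀ c : ℝ, 0 < c → c < r → infDist x (closure Aᶜ) ≤ dist x y - c := by
          intro c hc hcr
          set w := y + (c/dist x y) • (x - y) with hwdef
          have hcD : c/dist x y ≤ 1 := by
            rw [div_le_one hDpos]
            linarith
          have hwy : dist w y = c := by
            have e : w - y = (c/dist x y) • (x - y) := by rw [hwdef]; abel
            rw [dist_eq_norm, e, norm_smul, Real.norm_eq_abs,
              abs_of_nonneg (div_nonneg hc.le dist_nonneg), ← dist_eq_norm,
              div_mul_cancel₀ _ hDpos.ne']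
          have hwA : w ∉ A := by
            intro hwA'
            have h1 : infDist y A ≤ dist y w := infDist_le_dist_of_mem hwA'
            rw [dist_comm y w, hwy] at h1
            have h2 : r ≤ infDist y A := hy
            linarith
          have h3 : infDist x (closure Aᶜ) ≤ dist x w := by
            rw [hfcl_eq]
            exact infDist_le_dist_of_mem hwA
          have h4 : dist x w = dist x y - c := by
            have e : x - w = (1 - c/dist x y) • (x - y) := by
              rw [hwdef, sub_smul, one_smul]
              abel
            rw [dist_eq_norm, e, norm_smul, Real.norm_eq_abs,
              abs_of_nonneg (by linarith : (0:ℝ) ≤ 1 - c/dist x y), ← dist_eq_norm]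
            field_simp
          linarith
        have h5 : infDist x (closure Aᶜ) ≤ dist x y - r := by
          apply le_of_forall_pos_le_add
          intro η hη
          have hcpos : 0 < r - min (η/2) (r/2) := by
            have : min (η/2) (r/2) ≤ r/2 := min_le_right _ _
            linarith
          have hclt : r - min (η/2) (r/2) < r := by
            have : 0 < min (η/2) (r/2) := lt_min (by linarith) (by linarith)
            linarith
          have h6 := key (r - min (η/2) (r/2)) hcpos hclt
          have : min (η/2) (r/2) ≤ η/2 := min_le_left _ _
          linarith
        linarith
    have hP4 : ∀ x, infDist x (closure Aᶜ) = max (infDist x Y - r) 0 := by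
      intro x
      by_cases hx : x ∈ A
      · rw [hL2 x hx]
        have h0 : 0 ≤ infDist x (closure Aᶜ) := infDist_nonneg
        rw [show r + infDist x (closure Aᶜ) - r = infDist x (closure Aᶜ) by ring,
          max_eq_left h0]
      · have h1 : infDist x (closure Aᶜ) = 0 := by
          rw [hfcl_eq]
          exact infDist_zero_of_mem hx
        rw [h1]
        by_cases hxr : r ≤ infDist x A
        · rw [infDist_zero_of_mem (show x ∈ Y from hxr), max_eq_right (by linarith)]
        · push_neg at hxr
          rw [hL1 x hx hxr]
          have hpos : 0 < infDist x A := (hclosed.notMem_iff_infDist_pos hA).1 hx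
          rw [max_eq_right (by linarith)]
    have hP5 : ∀ x, max (r/2 - infDist x A) 0
        = max (infDist x Y - r/2) 0 - max (infDist x Y - r) 0 := by
      intro x
      by_cases hx : x ∈ A
      · have hdA0 : infDist x A = 0 := infDist_zero_of_mem hx
        have h2 := hL2 x hx
        have h0 : 0 ≤ infDist x (closure Aᶜ) := infDist_nonneg
        rw [hdA0, h2, max_eq_left (by linarith), max_eq_left (by linarith),
          max_eq_left (by linarith)]
        ring
      · by_cases hxr : r ≤ infDist x A
        · have hY0 : infDist x Y = 0 := infDist_zero_of_mem (show x ∈ Y from hxr)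
          rw [hY0, max_eq_right (by linarith), max_eq_right (by linarith),
            max_eq_right (by linarith)]
          ring
        · push_neg at hxr
          have hpos : 0 < infDist x A := (hclosed.notMem_iff_infDist_pos hA).1 hx
          rw [hL1 x hx hxr]
          rcases le_total (infDist x A) (r/2) with hc | hc
          · rw [max_eq_left (by linarith), max_eq_left (by linarith),
              max_eq_right (by linarith)]
            ring
          · rw [max_eq_right (by linarith), max_eq_right (by linarith),
              max_eq_right (by linarith)]
            ring
    have hP6 : ∀ x : EuclideanSpace ℝ (Fin d), infDist x A
        = max (infDist x A - r/2) 0 + r/2 - max (r/2 - infDist x A) 0 := by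
      intro x
      have h0 : 0 ≤ infDist x A := infDist_nonneg
      rcases le_total (infDist x A) (r/2) with hc | hc
      · rw [max_eq_right (by linarith), max_eq_left (by linarith)]
        ring
      · rw [max_eq_left (by linarith), max_eq_right (by linarith)]
        ring
    have hfrne : (frontier A).Nonempty := by
      obtain ⟨w0, hw0⟩ := hAc
      obtain ⟨a0, ha0⟩ := hA
      obtain ⟨w, hwfr, -⟩ := seg_to_frontier_of_not_mem A hclosed hw0 ha0
      exact ⟨w, hwfr⟩
    have hfrsubA : frontier A ⊆ A := by
      rw [frontier_eq_closure_inter_closure, hclosed.closure_eq]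
      exact inter_subset_left
    have hfrsubC : frontier A ⊆ closure Aᶜ := by
      rw [frontier_eq_closure_inter_closure, hclosed.closure_eq]
      exact inter_subset_right
    have hclAcne : (closure Aᶜ).Nonempty := hAc.closure
    have hP7 : ∀ x, infDist x (frontier A) = infDist x A + infDist x (closure Aᶜ) := by
      intro x
      by_cases hx : x ∈ A
      · rw [infDist_zero_of_mem hx, zero_add]
        apply le_antisymm
        · apply le_infDist_of hclAcne
          intro z hz
          obtain ⟨w, hwfr, hwd⟩ := seg_to_frontier_of_mem A hclosed hx hz
          exact le_trans (infDist_le_dist_of_mem hwfr) hwd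
        · exact infDist_le_infDist_of_subset hfrsubC hfrne
      · rw [infDist_zero_of_mem (show x ∈ closure Aᶜ from subset_closure hx), add_zero]
        apply le_antisymm
        · apply le_infDist_of hA
          intro a ha
          obtain ⟨w, hwfr, hwd⟩ := seg_to_frontier_of_not_mem A hclosed hx ha
          exact le_trans (infDist_le_dist_of_mem hwfr) hwd
        · exact infDist_le_infDist_of_subset hfrsubA hfrne
    obtain ⟨G1, H1, hG1, hH1, he1⟩ := dc_max_infDist_sub A hA (half_pos hrpos)
    obtain ⟨G2, H2, hG2, hH2, he2⟩ := dc_max_infDist_sub Y hYne (half_pos hrpos)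
    obtain ⟨G3, H3, hG3, hH3, he3⟩ := dc_max_infDist_sub Y hYne hrpos
    constructor
    · refine ⟨G3, H3, hG3, hH3, fun x _ => ?_⟩
      show infDist x (closure Aᶜ) = G3 x - H3 x
      rw [hP4 x]
      exact he3 x
    · refine ⟨fun x => G1 x + H2 x + (G3 x + G3 x) + r/2,
        fun x => H1 x + G2 x + (H3 x + H3 x), ?_, ?_, ?_⟩
      · exact ((hG1.add hH2).add (hG3.add hG3)).add_const (r/2)
      · exact (hH1.add hG2).add (hH3.add hH3)
      · intro x _
        show infDist x (frontier A) = _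
        have e1 := he1 x
        have e2 := he2 x
        have e3 := he3 x
        have p4 := hP4 x
        have p5 := hP5 x
        have p6 := hP6 x
        have p7 := hP7 x
        linarith [e1, e2, e3, p4, p5, p6, p7]
end

section
/- Let f : ℝ → ℝ be L-Lipschitz on [−1,1] and piecewise affine there with respect to a partition −1 = x₀ < x₁ < ⋯ < x_n = 1, and suppose f = g − h on [−1,1] with g, h convex. If s_i denotes the slope of f on [x_i, x_{i+1}], then ∑_{i=1}^{n−1} |s_i − s_{i−1}| ≤ 4L, where L is a common Lipschitz constant of g and h on [−1,1] multiplied by 2 (i.e., g, h are (L/2)-Lipschitz). -/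
theorem stmt_18 (n : ℕ) (hn : 1 ≤ n) (x : ℕ → ℝ)
    (hx0 : x 0 = -1) (hxn : x n = 1)
    (hmono : ∀ i < n, x i < x (i + 1))
    (f g h : ℝ → ℝ) (L : ℝ)
    (hfL : ∀ p ∈ Set.Icc (-1 : ℝ) 1, ∀ q ∈ Set.Icc (-1 : ℝ) 1,
      |f p - f q| ≤ L * |p - q|)
    (haff : ∀ i < n, ∃ a b : ℝ, ∀ t ∈ Set.Icc (x i) (x (i + 1)), f t = a * t + b)
    (hg : ConvexOn ℝ Set.univ g) (hh : ConvexOn ℝ Set.univ h)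
    (hgL : ∀ p ∈ Set.Icc (-1 : ℝ) 1, ∀ q ∈ Set.Icc (-1 : ℝ) 1,
      |g p - g q| ≤ L / 2 * |p - q|)
    (hhL : ∀ p ∈ Set.Icc (-1 : ℝ) 1, ∀ q ∈ Set.Icc (-1 : ℝ) 1,
      |h p - h q| ≤ L / 2 * |p - q|)
    (hfgh : ∀ t ∈ Set.Icc (-1 : ℝ) 1, f t = g t - h t)
    (s : ℕ → ℝ)
    (hs : ∀ i < n, s i = (f (x (i + 1)) - f (x i)) / (x (i + 1) - x i)) :
    ∑ i ∈ Finset.Ico 1 n, |s i - s (i - 1)| ≤ 4 * L := by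
  classical
  -- x is monotone on {0,...,n}
  have hxle : ∀ i j, i ≤ j → j ≤ n → x i ≤ x j := by
    intro i j hij hjn
    induction j with
    | zero =>
      interval_cases i
      exact le_rfl
    | succ k ih =>
      rcases Nat.lt_or_ge i (k + 1) with hk | hk
      · exact (ih (by omega) (by omega)).trans (le_of_lt (hmono k (by omega)))
      · have : i = k + 1 := le_antisymm hij hk
        rw [this]
  have hxmem : ∀ i, i ≤ n → x i ∈ Set.Icc (-1 : ℝ) 1 := by
    intro i hi
    constructor
    · rw [← hx0]; exact hxle 0 i (Nat.zero_le _) hi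
    · rw [← hxn]; exact hxle i n hi le_rfl
  have hL0 : 0 ≤ L := by
    have := hgL (-1) (by norm_num) 1 (by norm_num)
    have h0 : (0:ℝ) ≤ |g (-1) - g 1| := abs_nonneg _
    norm_num at this
    linarith
  set G : ℕ → ℝ := fun i => (g (x (i + 1)) - g (x i)) / (x (i + 1) - x i) with hGdef
  set H : ℕ → ℝ := fun i => (h (x (i + 1)) - h (x i)) / (x (i + 1) - x i) with hHdef
  have hsGH : ∀ i < n, s i = G i - H i := by
    intro i hi
    have hd : x (i + 1) - x i ≠ 0 := ne_of_gt (by linarith [hmono i hi])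
    rw [hs i hi, hfgh (x (i + 1)) (hxmem (i + 1) hi), hfgh (x i) (hxmem i hi.le),
      hGdef, hHdef]
    field_simp
    ring
  -- slopes of a convex function are monotone, and bounded by L/2 via Lipschitz
  have key : ∀ (F : ℝ → ℝ), ConvexOn ℝ Set.univ F →
      (∀ p ∈ Set.Icc (-1 : ℝ) 1, ∀ q ∈ Set.Icc (-1 : ℝ) 1, |F p - F q| ≤ L / 2 * |p - q|) →
      ∑ i ∈ Finset.Ico 1 n,
        |(F (x (i + 1)) - F (x i)) / (x (i + 1) - x i)
          - (F (x (i - 1 + 1)) - F (x (i - 1))) / (x (i - 1 + 1) - x (i - 1))| ≤ L := by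
    intro F hF hFL
    set S : ℕ → ℝ := fun i => (F (x (i + 1)) - F (x i)) / (x (i + 1) - x i) with hSdef
    have hSmono : ∀ i, i + 1 < n → S i ≤ S (i + 1) := by
      intro i hi
      exact hF.slope_mono_adjacent (Set.mem_univ (x i)) (Set.mem_univ (x (i + 2)))
        (hmono i (by omega)) (hmono (i + 1) hi)
    have hSbd : ∀ i < n, |S i| ≤ L / 2 := by
      intro i hi
      have hd : 0 < x (i + 1) - x i := by linarith [hmono i hi]
      have hb := hFL (x (i + 1)) (hxmem (i + 1) hi) (x i) (hxmem i hi.le)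
      rw [hSdef]
      rw [abs_div, abs_of_pos hd, div_le_iff₀ hd]
      calc |F (x (i + 1)) - F (x i)| ≤ L / 2 * |x (i + 1) - x i| := hb
        _ = L / 2 * (x (i + 1) - x i) := by rw [abs_of_pos hd]
    have heq : ∑ i ∈ Finset.Ico 1 n, |S i - S (i - 1)|
        = ∑ j ∈ Finset.range (n - 1), (S (j + 1) - S j) := by
      rw [Finset.sum_Ico_eq_sum_range]
      apply Finset.sum_congr rfl
      intro j hj
      simp only [Finset.mem_range] at hj
      have e1 : 1 + j = j + 1 := by omega
      rw [e1]
      simp only [Nat.add_sub_cancel]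
      rw [abs_of_nonneg (by linarith [hSmono j (by omega)])]
    rw [heq, Finset.sum_range_sub]
    have h1 := abs_le.mp (hSbd 0 (by omega))
    have h2 := abs_le.mp (hSbd (n - 1) (by omega))
    linarith [h1.1, h2.2]
  have hGsum := key g hg hgL
  have hHsum := key h hh hhL
  have hpt : ∀ i ∈ Finset.Ico 1 n, |s i - s (i - 1)| ≤
      |G i - G (i - 1)| + |H i - H (i - 1)| := by
    intro i hi
    simp only [Finset.mem_Ico] at hi
    rw [hsGH i hi.2, hsGH (i - 1) (by omega)]
    calc |G i - H i - (G (i - 1) - H (i - 1))|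
        = |(G i - G (i - 1)) - (H i - H (i - 1))| := by ring_nf
      _ ≤ |G i - G (i - 1)| + |H i - H (i - 1)| := abs_sub _ _
  calc ∑ i ∈ Finset.Ico 1 n, |s i - s (i - 1)|
      ≤ ∑ i ∈ Finset.Ico 1 n, (|G i - G (i - 1)| + |H i - H (i - 1)|) :=
        Finset.sum_le_sum hpt
    _ = (∑ i ∈ Finset.Ico 1 n, |G i - G (i - 1)|)
        + ∑ i ∈ Finset.Ico 1 n, |H i - H (i - 1)| := Finset.sum_add_distrib
    _ ≤ L + L := add_le_add hGsum hHsum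
    _ ≤ 4 * L := by linarith
end
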